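/- arXiv:2111.08120 — 7 statements merged into one kernel-verified Lean document; each statement's English description precedes it below -/
import Mathlib

section
/- Let L be a relational language containing a binary relation symbol E, and let K be a class of finite L-structures such that: (1) K is closed under isomorphism; (2) K has the hereditary property; (3) there is exactly one singleton structure in K up to isomorphism; (4) for every A ∈ K, the interpretation of E in A is a transitive relation; and (5) there exist A_0, A_1 ∈ K, each with universe {0,1}, such that A_0 ⊨ E(0,1) and A_1 ⊨ ¬E(0,1). Then K does not have the disjoint 3-amalgamation property. -/
/- Definitions following "Products of Classes of Finite Structures"
   (Guingona, Parnes, Scow). -/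

open CategoryTheory FirstOrder FirstOrder.Language FirstOrder.Language.Structure

universe u v w w' u0 v0 u1 v1

namespace ProductsPaper

instance graphIsRelational : Language.graph.IsRelational :=
  fun _ => inferInstanceAs (IsEmpty Empty)

/-- The induced structure on a subset, for a relational language. -/
instance setStructure (L : FirstOrder.Language.{u, v}) [L.IsRelational] {M : Type w}
    [L.Structure M] (s : Set M) : L.Structure s where
  funMap f _ := isEmptyElim f
  RelMap R x := RelMap R fun i => (x i : M)

/-- A class of structures: a set of bundled structures (with universes in `Type 0`). -/
abbrev StructClass (L : FirstOrder.Language.{u, v}) := Set (Bundled.{0} L.Structure)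

variable {L : FirstOrder.Language.{u, v}}

/-- Every member of the class is finite. -/
def AllFinite (K : StructClass L) : Prop := ∀ A ∈ K, Finite A

/-- The class is closed under isomorphism. -/
def IsoClosed (K : StructClass L) : Prop :=
  ∀ A ∈ K, ∀ B : Bundled.{0} L.Structure, Nonempty (A ≃[L] B) → B ∈ K

/-- The class `K` is indivisible: for every `A ∈ K` and `k ≥ 2` there is `B ∈ K` such that
every `k`-coloring of `B` admits a monochromatic embedded copy of `A`. -/
def Indivisible (K : StructClass L) : Prop :=
  ∀ A ∈ K, ∀ k : ℕ, 2 ≤ k → ∃ B ∈ K, ∀ c : B → Fin k,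
    ∃ f : A ↪[L] B, ∃ i : Fin k, ∀ a : A, c (f a) = i

/-- The joint embedding property. -/
def JEP (K : StructClass L) : Prop :=
  ∀ A ∈ K, ∀ B ∈ K, ∃ C ∈ K, Nonempty (A ↪[L] C) ∧ Nonempty (B ↪[L] C)

/-- The amalgamation property. -/
def AP (K : StructClass L) : Prop :=
  ∀ (A B₀ B₁ : Bundled.{0} L.Structure), A ∈ K → B₀ ∈ K → B₁ ∈ K →
    ∀ (f₀ : A ↪[L] B₀) (f₁ : A ↪[L] B₁),
      ∃ C ∈ K, ∃ (g₀ : B₀ ↪[L] C) (g₁ : B₁ ↪[L] C), g₀.comp f₀ = g₁.comp f₁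

/-- The strong (disjoint) amalgamation property. -/
def SAP (K : StructClass L) : Prop :=
  ∀ (A B₀ B₁ : Bundled.{0} L.Structure), A ∈ K → B₀ ∈ K → B₁ ∈ K →
    ∀ (f₀ : A ↪[L] B₀) (f₁ : A ↪[L] B₁),
      ∃ C ∈ K, ∃ (g₀ : B₀ ↪[L] C) (g₁ : B₁ ↪[L] C), g₀.comp f₀ = g₁.comp f₁ ∧
        Set.range g₀ ∩ Set.range g₁ = Set.range (g₀.comp f₀)

/-- The hereditary property: every substructure (equivalently, subset, since the language is
relational) of a member of the class is a member of the class. -/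
def HereditaryC [L.IsRelational] (K : StructClass L) : Prop :=
  ∀ A ∈ K, ∀ s : Set A, (⟨s, setStructure L s⟩ : Bundled.{0} L.Structure) ∈ K

/-- The age of a structure: the class of all finite structures embeddable in it. -/
def ageC (L : FirstOrder.Language.{u, v}) (M : Type w) [L.Structure M] : StructClass L :=
  {A | Finite A ∧ Nonempty (A ↪[L] M)}

/-- The proper subsets of `{0, …, n-1}`, indexing a disjoint amalgamation problem. -/
abbrev ProperSub (n : ℕ) := {p : Finset (Fin n) // p ≠ Finset.univ}

lemma inter_ne_univ {n : ℕ} (p q : ProperSub n) : p.1 ∩ q.1 ≠ Finset.univ := by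
  intro h
  apply p.2
  apply Finset.eq_univ_of_forall
  intro x
  have hx : x ∈ p.1 ∩ q.1 := by rw [h]; exact Finset.mem_univ x
  exact (Finset.mem_inter.mp hx).1

/-- The intersection of two proper subsets of `Fin n`, as a proper subset. -/
def interP {n : ℕ} (p q : ProperSub n) : ProperSub n := ⟨p.1 ∩ q.1, inter_ne_univ p q⟩

/-- The disjoint `n`-amalgamation property: every disjoint amalgamation system indexed by the
proper subsets of `{0, …, n-1}` extends to a disjoint amalgamation system indexed by all
subsets of `{0, …, n-1}`, i.e., it admits a top structure `C ∈ K` together with embeddings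
commuting with the given system and satisfying the disjointness condition. -/
def DisjointNAmalg (K : StructClass L) (n : ℕ) : Prop :=
  ∀ (A : ProperSub n → Bundled.{0} L.Structure)
    (f : ∀ p q : ProperSub n, p.1 ⊆ q.1 → (A p ↪[L] A q)),
    (∀ p, A p ∈ K) →
    (∀ (p : ProperSub n) (h : p.1 ⊆ p.1), f p p h = Embedding.refl L (A p)) →
    (∀ (p q r : ProperSub n) (hpq : p.1 ⊆ q.1) (hqr : q.1 ⊆ r.1),
      f p r (hpq.trans hqr) = (f q r hqr).comp (f p q hpq)) →
    (∀ (p q r : ProperSub n) (hpr : p.1 ⊆ r.1) (hqr : q.1 ⊆ r.1),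
      Set.range (f p r hpr) ∩ Set.range (f q r hqr)
        = Set.range (f (interP p q) r (Finset.inter_subset_left.trans hpr))) →
    ∃ C ∈ K, ∃ g : ∀ p : ProperSub n, A p ↪[L] C,
      (∀ (p q : ProperSub n) (hpq : p.1 ⊆ q.1), (g q).comp (f p q hpq) = g p) ∧
      (∀ p q : ProperSub n,
        Set.range (g p) ∩ Set.range (g q) = Set.range (g (interP p q)))

section DSS

variable (L) [L.IsRelational]

/-- `qfClassSet L C0 c` is the set of elements `c'` such that the map fixing `C0`
pointwise and sending `c` to `c'` is an isomorphism from `C0 ∪ {c}` onto `C0 ∪ {c'}`. -/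
def qfClassSet {C : Type w} [L.Structure C] (C0 : Set C) (c : C) : Set C :=
  {c' | c' ∉ C0 ∧ ∀ ⦃m : ℕ⦄ (R : L.Relations m) (x x' : Fin m → C),
    (∀ i, (x i = c ∧ x' i = c') ∨ (x i ∈ C0 ∧ x' i = x i)) →
    (RelMap R x ↔ RelMap R x')}

/-- A class of structures is definably self-similar. -/
def DefinablySelfSimilar (K : StructClass L) : Prop :=
  ∀ A B C : Bundled.{0} L.Structure, A ∈ K → B ∈ K → C ∈ K →
    ∀ (f : A ↪[L] B) (C0 : Set C) (c : C), c ∉ C0 →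
    ∀ g : A ↪[L] (qfClassSet L C0 c), ∃ D ∈ K, ∃ (j : C ↪[L] D)
      (h : B ↪[L] (qfClassSet L (⇑j '' C0) (j c))),
      ∀ a : A, (h (f a) : D) = j (g a : C)

end DSS

/-- The class `K` has exactly one singleton structure up to isomorphism. -/
def UniqueSingleton (K : StructClass L) : Prop :=
  (∃ A ∈ K, Nonempty A ∧ Subsingleton A) ∧
  (∀ A B : Bundled.{0} L.Structure, A ∈ K → B ∈ K →
    Nonempty A → Subsingleton A → Nonempty B → Subsingleton B → Nonempty (A ≃[L] B))

/-- Ultrahomogeneity: every embedding of a finite substructure extends to an automorphism. -/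
def Ultrahomogeneous (L : FirstOrder.Language.{u, v}) [L.IsRelational] (M : Type w)
    [L.Structure M] : Prop :=
  ∀ s : Set M, s.Finite → ∀ f : s ↪[L] M, ∃ g : M ≃[L] M, ∀ x : s, g x = f x

/-- The class has countably many structures up to isomorphism. -/
def EssentiallyCountable (K : StructClass L) : Prop :=
  ∃ S : StructClass L, S.Countable ∧ ∀ A ∈ K, ∃ B ∈ S, Nonempty (A ≃[L] B)

/-- A Fraïssé class: nonempty, countably many members up to isomorphism, hereditary,
with the joint embedding and amalgamation properties. -/
def FraisseClass [L.IsRelational] (K : StructClass L) : Prop :=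
  K.Nonempty ∧ EssentiallyCountable K ∧ HereditaryC K ∧ JEP K ∧ AP K

/-- `M` is a Fraïssé limit of the class `K`: countable, ultrahomogeneous, with age `K`. -/
def IsFraisseLimitC [L.IsRelational] (K : StructClass L) (M : Type w) [L.Structure M] : Prop :=
  Countable M ∧ Ultrahomogeneous L M ∧ ageC L M = K

variable {L0 : FirstOrder.Language.{u0, v0}} {L1 : FirstOrder.Language.{u1, v1}}

/-- The language of the lexicographic product: the disjoint union of the two languages plus a
new binary relation symbol `E` (the unique relation symbol of `Language.graph`). -/
def lexLang (L0 : FirstOrder.Language.{u0, v0}) (L1 : FirstOrder.Language.{u1, v1}) :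
    FirstOrder.Language :=
  (L0.sum L1).sum Language.graph

/-- The language of the full product: the disjoint union of the two languages plus two
new binary relation symbols `E0` and `E1`. -/
def fullLang (L0 : FirstOrder.Language.{u0, v0}) (L1 : FirstOrder.Language.{u1, v1}) :
    FirstOrder.Language :=
  (L0.sum L1).sum (Language.graph.sum Language.graph)


instance lexLangIsRelational [L0.IsRelational] [L1.IsRelational] :
    (lexLang L0 L1).IsRelational :=
  inferInstanceAs (((L0.sum L1).sum Language.graph).IsRelational)

instance fullLangIsRelational [L0.IsRelational] [L1.IsRelational] :
    (fullLang L0 L1).IsRelational :=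
  inferInstanceAs (((L0.sum L1).sum (Language.graph.sum Language.graph)).IsRelational)

section Products

variable [L0.IsRelational] [L1.IsRelational]

/-- Interpretation of `L0` on a lexicographic product. -/
def lexStr0 {B : Type w} (A : B → Type w') [∀ b, L0.Structure (A b)] :
    L0.Structure (Σ b, A b) where
  funMap f _ := isEmptyElim f
  RelMap {n} R x := ∃ (b : B) (a : Fin n → A b), (∀ i, x i = ⟨b, a i⟩) ∧ RelMap R a

/-- Interpretation of `L1` on a lexicographic product. -/
def lexStr1 {B : Type w} [L1.Structure B] (A : B → Type w') :
    L1.Structure (Σ b, A b) where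
  funMap f _ := isEmptyElim f
  RelMap R x := RelMap R fun i => (x i).1

/-- Interpretation of the extra binary relation `E` on a lexicographic product. -/
def lexStrE {B : Type w} (A : B → Type w') : Language.graph.Structure (Σ b, A b) where
  funMap f _ := isEmptyElim f
  RelMap {n} R := match n, R with
    | _, .adj => fun x => (x 0).1 = (x 1).1

/-- The lexicographic product of the structures `A b` along `B`. -/
def lexStr {B : Type w} [L1.Structure B] (A : B → Type w') [∀ b, L0.Structure (A b)] :
    (lexLang L0 L1).Structure (Σ b, A b) :=
  @Language.sumStructure _ _ _
    (@Language.sumStructure _ _ _ (lexStr0 A) (lexStr1 A)) (lexStrE A)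

/-- The lexicographic product `A ≀ B` of two structures (as a type). -/
def lexProd (L0 : FirstOrder.Language.{u0, v0}) (L1 : FirstOrder.Language.{u1, v1})
    (A : Type w) (B : Type w') : Type max w w' :=
  Σ _ : B, A

instance lexProdStr (A : Type w) (B : Type w') [L0.Structure A] [L1.Structure B] :
    (lexLang L0 L1).Structure (lexProd L0 L1 A B) :=
  lexStr fun _ : B => A

/-- The lexicographic product of a family of bundled structures along a bundled structure. -/
def lexBundle (B : Bundled.{0} L1.Structure) (A : B → Bundled.{0} L0.Structure) :
    Bundled.{0} (lexLang L0 L1).Structure :=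
  ⟨Σ b : B, A b, lexStr fun b => (A b : Type)⟩

/-- The lexicographic product of two classes of structures. -/
def lexClass (K0 : StructClass L0) (K1 : StructClass L1) : StructClass (lexLang L0 L1) :=
  {C | ∃ B ∈ K1, ∃ A : B → Bundled.{0} L0.Structure, (∀ b, A b ∈ K0) ∧
    Nonempty (C ≃[lexLang L0 L1] lexBundle B A)}

/-- Interpretation of `L0` on a full product. -/
def fullStr0 (A : Type w) (B : Type w') [L0.Structure A] : L0.Structure (A × B) where
  funMap f _ := isEmptyElim f
  RelMap R x := RelMap R fun i => (x i).1

/-- Interpretation of `L1` on a full product. -/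
def fullStr1 (A : Type w) (B : Type w') [L1.Structure B] : L1.Structure (A × B) where
  funMap f _ := isEmptyElim f
  RelMap R x := RelMap R fun i => (x i).2

/-- Interpretation of `E0` on a full product. -/
def fullStrE0 (A : Type w) (B : Type w') : Language.graph.Structure (A × B) where
  funMap f _ := isEmptyElim f
  RelMap {n} R := match n, R with
    | _, .adj => fun x => (x 0).1 = (x 1).1

/-- Interpretation of `E1` on a full product. -/
def fullStrE1 (A : Type w) (B : Type w') : Language.graph.Structure (A × B) where
  funMap f _ := isEmptyElim f
  RelMap {n} R := match n, R with
    | _, .adj => fun x => (x 0).2 = (x 1).2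

/-- The full product `A ⊠ B` of two structures, as a structure on `A × B`. -/
def fullStr (A : Type w) (B : Type w') [L0.Structure A] [L1.Structure B] :
    (fullLang L0 L1).Structure (A × B) :=
  @Language.sumStructure _ _ _
    (@Language.sumStructure _ _ _ (fullStr0 A B) (fullStr1 A B))
    (@Language.sumStructure _ _ _ (fullStrE0 A B) (fullStrE1 A B))

/-- The full product `A ⊠ B` of two structures (as a type). -/
def fullProd (L0 : FirstOrder.Language.{u0, v0}) (L1 : FirstOrder.Language.{u1, v1})
    (A : Type w) (B : Type w') : Type max w w' :=
  A × B

instance fullProdStr (A : Type w) (B : Type w') [L0.Structure A] [L1.Structure B] :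
    (fullLang L0 L1).Structure (fullProd L0 L1 A B) :=
  fullStr A B

/-- The full product of two bundled structures. -/
def fullBundle (A : Bundled.{0} L0.Structure) (B : Bundled.{0} L1.Structure) :
    Bundled.{0} (fullLang L0 L1).Structure :=
  ⟨A × B, fullStr A B⟩

/-- The full product of two classes of structures. -/
def fullClass (K0 : StructClass L0) (K1 : StructClass L1) : StructClass (fullLang L0 L1) :=
  {C | Finite C ∧ ∃ A ∈ K0, ∃ B ∈ K1, Nonempty (C ↪[fullLang L0 L1] fullBundle A B)}

end Products

/-- The free superposition of two classes of structures: all finite structures in the disjoint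
union language whose reducts to the two languages lie in the respective classes. -/
def freeClass (K0 : StructClass L0) (K1 : StructClass L1) : StructClass (L0.sum L1) :=
  {C | Finite C ∧
    (⟨C, (LHom.sumInl (L := L0) (L' := L1)).reduct C⟩ : Bundled.{0} L0.Structure) ∈ K0 ∧
    (⟨C, (LHom.sumInr (L := L0) (L' := L1)).reduct C⟩ : Bundled.{0} L1.Structure) ∈ K1}

/-- A configuration of the class `K` into `M^n`: an interpretation of the relation symbols of
`L0` as `L`-formulas with parameters from `M`, together with maps `f_A : A → M^n` for `A ∈ K`,
such that each relation of each `A ∈ K` is defined by the corresponding formula. -/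
structure Config (L0 : FirstOrder.Language.{u0, v0}) (K : StructClass L0)
    (L : FirstOrder.Language.{u, v}) (M : Type w) [L.Structure M] (n : ℕ) where
  I : ∀ {m : ℕ}, L0.Relations m → L.Formula ((Fin m × Fin n) ⊕ M)
  f : ∀ (A : Bundled.{0} L0.Structure), A ∈ K → A → Fin n → M
  compat : ∀ (A : Bundled.{0} L0.Structure) (hA : A ∈ K) {m : ℕ} (R : L0.Relations m)
      (a : Fin m → A),
    RelMap R a ↔ (I R).Realize (Sum.elim (fun p => f A hA (a p.1) p.2) id)

/-- A configuration is injective if all the maps `f_A` are injective. -/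
def Config.Injective {K : StructClass L0} {L : FirstOrder.Language.{u, v}} {M : Type w}
    [L.Structure M] {n : ℕ} (c : Config L0 K L M n) : Prop :=
  ∀ (A : Bundled.{0} L0.Structure) (hA : A ∈ K), Function.Injective (c.f A hA)

/-- A complete theory `T` admits a `K`-configuration if some model of `T` admits a
`K`-configuration into some finite power. -/
def AdmitsConfig (K : StructClass L0) {L : FirstOrder.Language.{u, v}} (T : L.Theory) : Prop :=
  ∃ (M : Type max u v) (_ : L.Structure M), M ⊨ T ∧ ∃ n : ℕ, Nonempty (Config L0 K L M n)

/-- `T` has an infinite model. -/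
def HasInfiniteModel {L : FirstOrder.Language.{u, v}} (T : L.Theory) : Prop :=
  ∃ (M : Type max u v) (_ : L.Structure M), M ⊨ T ∧ Infinite M

/-- The binary relation of a `Language.graph`-structure. -/
def rel2 {M : Type w} [Language.graph.Structure M] (x y : M) : Prop :=
  RelMap Language.adj ![x, y]

/-- The class of all finite strict partial orders. -/
def POClass : StructClass Language.graph :=
  {A | Finite A ∧ (∀ x : A, ¬ rel2 x x) ∧ ∀ x y z : A, rel2 x y → rel2 y z → rel2 x z}

/-- The class of all finite tournaments. -/
def TournClass : StructClass Language.graph :=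
  {A | Finite A ∧ (∀ x : A, ¬ rel2 x x) ∧ ∀ x y : A, x ≠ y → Xor' (rel2 x y) (rel2 y x)}

/-- The class of all finite directed graphs. -/
def DGClass : StructClass Language.graph :=
  {A | Finite A ∧ ∀ x : A, ¬ rel2 x x}

/-- The class of all finite (simple) graphs. -/
def GClass : StructClass Language.graph :=
  {A | Finite A ∧ (∀ x : A, ¬ rel2 x x) ∧ ∀ x y : A, rel2 x y → rel2 y x}
section Stmt7Aux

variable {L : FirstOrder.Language.{u, v}} [L.IsRelational]

/-- Inclusion of a set substructure. -/
def inclEmb {M : Type w} [L.Structure M] (s : Set M) :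
    @Embedding L s M (setStructure L s) _ where
  toFun := Subtype.val
  inj' := Subtype.val_injective
  map_fun' := fun f _ => isEmptyElim f
  map_rel' := fun _ _ => Iff.rfl

/-- Inclusion between set substructures. -/
def incl2Emb {M : Type w} [L.Structure M] {s t : Set M} (h : s ⊆ t) :
    @Embedding L s t (setStructure L s) (setStructure L t) where
  toFun := Set.inclusion h
  inj' := Set.inclusion_injective h
  map_fun' := fun f _ => isEmptyElim f
  map_rel' := fun _ _ => Iff.rfl

lemma fin3cases : ∀ a : Fin 3, a = 0 ∨ a = 1 ∨ a = 2 := by decide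

lemma finset3cases : ∀ s : Finset (Fin 3),
    s = ∅ ∨ s = {0} ∨ s = {1} ∨ s = {2} ∨ s = {0,1} ∨ s = {0,2} ∨ s = {1,2} ∨ s = Finset.univ := by
  decide

lemma q_from0 : ∀ s : Finset (Fin 3), 0 ∈ s → s ≠ {0} → s ≠ {0,2} → s ≠ Finset.univ → s = {0,1} := by decide
lemma q_from1 : ∀ s : Finset (Fin 3), 1 ∈ s → s ≠ {1} → s ≠ {0,1} → s ≠ Finset.univ → s = {1,2} := by decide
lemma q_from2 : ∀ s : Finset (Fin 3), 2 ∈ s → s ≠ {2} → s ≠ {0,2} → s ≠ Finset.univ → s = {1,2} := by decide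

lemma range_of_const {α : Type*} {β : Type*} [Nonempty α] {f : α → β} {c : β}
    (h : ∀ a, f a = c) : Set.range f = {c} := by
  ext y
  simp only [Set.mem_range, Set.mem_singleton_iff]
  constructor
  · rintro ⟨a, rfl⟩; exact h a
  · rintro rfl; exact ⟨Classical.arbitrary α, h _⟩

lemma bcast {X Y : Bundled.{0} L.Structure} (h : X = Y) : (X : Type) = (Y : Type) :=
  congrArg _ h

def castEmb {X X' Y Y' : Bundled.{0} L.Structure} (hX : X = X') (hY : Y = Y')
    (f : X ↪[L] Y) : X' ↪[L] Y' :=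
  match X', Y', hX, hY with
  | _, _, rfl, rfl => f

lemma castEmb_apply {X X' Y Y' : Bundled.{0} L.Structure} (hX : X = X') (hY : Y = Y')
    (f : X ↪[L] Y) (x : X') :
    castEmb hX hY f x = cast (bcast hY) (f (cast (bcast hX.symm) x)) := by
  subst hX; subst hY; rfl

lemma castEmb_range {X X' Y Y' : Bundled.{0} L.Structure} (hX : X = X') (hY : Y = Y')
    (f : X ↪[L] Y) :
    Set.range ⇑(castEmb hX hY f) = cast (bcast hY) '' Set.range ⇑f := by
  subst hX; subst hY
  show Set.range ⇑f = cast (bcast (rfl : Y = Y)) '' Set.range ⇑f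
  rw [show (cast (bcast (rfl : Y = Y)) : Y → Y) = id from rfl, Set.image_id]

lemma relMap_cast2 {X Y : Bundled.{0} L.Structure} (h : X = Y) (R : L.Relations 2) (a b : X) :
    RelMap R ![cast (bcast h) a, cast (bcast h) b] ↔ RelMap R ![a, b] := by
  subst h
  have hv : (![cast (bcast (rfl : X = X)) a, cast (bcast rfl) b]) = ![a, b] := by
    funext i; fin_cases i <;> rfl
  rw [hv]

lemma map_rel2 {X Y : Bundled.{0} L.Structure} (f : X ↪[L] Y) (R : L.Relations 2) (a b : X) :
    RelMap R ![f a, f b] ↔ RelMap R ![a, b] := by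
  have h : (⇑f ∘ ![a, b]) = ![f a, f b] := by funext i; fin_cases i <;> rfl
  rw [← h]
  exact f.map_rel R ![a, b]

end Stmt7Aux

section Stmt7Aux2

variable {L : FirstOrder.Language.{u, v}} [L.IsRelational]
variable (EB SB B B' : Bundled.{0} L.Structure)

def AA (p : ProperSub 3) : Bundled.{0} L.Structure :=
  if p.1 = ∅ then EB
  else if p.1.card = 1 then SB
  else if p.1 = ({0, 2} : Finset (Fin 3)) then B'
  else B

lemma AA_empty {p : ProperSub 3} (hp : p.1 = ∅) : AA EB SB B B' p = EB := by
  unfold AA; rw [if_pos hp]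

lemma AA_single {p : ProperSub 3} (hp : p.1.card = 1) : AA EB SB B B' p = SB := by
  unfold AA
  rw [if_neg (by intro h; rw [h] at hp; simp at hp), if_pos hp]

lemma AA_02 {p : ProperSub 3} (hp : p.1 = ({0, 2} : Finset (Fin 3))) :
    AA EB SB B B' p = B' := by
  unfold AA
  rw [if_neg (by rw [hp]; decide), if_neg (by rw [hp]; decide), if_pos hp]

lemma AA_else {p : ProperSub 3} (h0 : ¬ p.1 = ∅) (h1 : ¬ p.1.card = 1)
    (h2 : ¬ p.1 = ({0, 2} : Finset (Fin 3))) : AA EB SB B B' p = B := by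
  unfold AA; rw [if_neg h0, if_neg h1, if_neg h2]

lemma AA_pair {p : ProperSub 3}
    (h : p.1 = ({0, 1} : Finset (Fin 3)) ∨ p.1 = ({1, 2} : Finset (Fin 3))) :
    AA EB SB B B' p = B := by
  rcases h with h | h <;>
    exact AA_else EB SB B B' (by rw [h]; decide) (by rw [h]; decide) (by rw [h]; decide)

variable (j0 j1 : SB ↪[L] B) (j0' j1' : SB ↪[L] B') (ι : EB ↪[L] SB)

def ff (p q : ProperSub 3) (h : p.1 ⊆ q.1) : AA EB SB B B' p ↪[L] AA EB SB B B' q :=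
  if hpq : p = q then
    castEmb rfl (congrArg (AA EB SB B B') hpq) (Embedding.refl L (AA EB SB B B' p))
  else if hp : p.1 = ∅ then
    if hq1 : q.1.card = 1 then
      castEmb (AA_empty EB SB B B' hp).symm (AA_single EB SB B B' hq1).symm ι
    else if hq2 : q.1 = ({0, 2} : Finset (Fin 3)) then
      castEmb (AA_empty EB SB B B' hp).symm (AA_02 EB SB B B' hq2).symm (j0'.comp ι)
    else if hq0 : q.1 = ∅ then absurd (Subtype.ext (hp.trans hq0.symm)) hpq
    else
      castEmb (AA_empty EB SB B B' hp).symm (AA_else EB SB B B' hq0 hq1 hq2).symm (j0.comp ι)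
  else
    have hpq' : p.1 ≠ q.1 := fun hh => hpq (Subtype.ext hh)
    have hp1 : p.1.card = 1 := by
      have hss : p.1 ⊂ q.1 := Finset.ssubset_iff_subset_ne.mpr ⟨h, hpq'⟩
      have h1 := Finset.card_lt_card hss
      have hss2 : q.1 ⊂ Finset.univ :=
        Finset.ssubset_iff_subset_ne.mpr ⟨Finset.subset_univ _, q.2⟩
      have h2 := Finset.card_lt_card hss2
      have h3 : (Finset.univ : Finset (Fin 3)).card = 3 := by decide
      have h4 : p.1.card ≠ 0 := fun hh => hp (Finset.card_eq_zero.mp hh)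
      omega
    if h0 : (0 : Fin 3) ∈ p.1 then
      have hp0 : p.1 = {0} := by
        obtain ⟨a, ha⟩ := Finset.card_eq_one.mp hp1
        rw [ha] at h0 ⊢
        rw [Finset.mem_singleton] at h0
        rw [h0]
      if hq2 : q.1 = ({0, 2} : Finset (Fin 3)) then
        castEmb (AA_single EB SB B B' hp1).symm (AA_02 EB SB B B' hq2).symm j0'
      else
        castEmb (AA_single EB SB B B' hp1).symm
          (AA_pair EB SB B B'
            (Or.inl (q_from0 q.1 (h h0) (fun hh => hpq' (hp0.trans hh.symm)) hq2 q.2))).symm j0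
    else if h1 : (1 : Fin 3) ∈ p.1 then
      have hp0 : p.1 = {1} := by
        obtain ⟨a, ha⟩ := Finset.card_eq_one.mp hp1
        rw [ha] at h1 ⊢
        rw [Finset.mem_singleton] at h1
        rw [h1]
      if hq2 : q.1 = ({0, 1} : Finset (Fin 3)) then
        castEmb (AA_single EB SB B B' hp1).symm (AA_pair EB SB B B' (Or.inl hq2)).symm j1
      else
        castEmb (AA_single EB SB B B' hp1).symm
          (AA_pair EB SB B B'
            (Or.inr (q_from1 q.1 (h h1) (fun hh => hpq' (hp0.trans hh.symm)) hq2 q.2))).symm j0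
    else
      have h2 : (2 : Fin 3) ∈ p.1 := by
        obtain ⟨a, ha⟩ := Finset.card_eq_one.mp hp1
        rcases fin3cases a with h' | h' | h'
        · exfalso; apply h0; rw [ha, h']; exact Finset.mem_singleton_self 0
        · exfalso; apply h1; rw [ha, h']; exact Finset.mem_singleton_self 1
        · rw [ha, h']; exact Finset.mem_singleton_self 2
      have hp0 : p.1 = {2} := by
        obtain ⟨a, ha⟩ := Finset.card_eq_one.mp hp1
        rw [ha] at h2 ⊢
        rw [Finset.mem_singleton] at h2
        rw [h2]
      if hq2 : q.1 = ({0, 2} : Finset (Fin 3)) then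
        castEmb (AA_single EB SB B B' hp1).symm (AA_02 EB SB B B' hq2).symm j1'
      else
        castEmb (AA_single EB SB B B' hp1).symm
          (AA_pair EB SB B B'
            (Or.inr (q_from2 q.1 (h h2) (fun hh => hpq' (hp0.trans hh.symm)) hq2 q.2))).symm j1

end Stmt7Aux2

section Stmt7Aux3

variable {L : FirstOrder.Language.{u, v}} [L.IsRelational]
variable (EB SB B B' : Bundled.{0} L.Structure)
variable (j0 j1 : SB ↪[L] B) (j0' j1' : SB ↪[L] B') (ι : EB ↪[L] SB)

lemma ff_self (p : ProperSub 3) (h : p.1 ⊆ p.1) :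
    ff EB SB B B' j0 j1 j0' j1' ι p p h = Embedding.refl L (AA EB SB B B' p) := by
  unfold ff
  rw [dif_pos rfl]
  rfl

lemma ff_0_01 (h : (⟨{0}, by decide⟩ : ProperSub 3).1 ⊆ (⟨{0,1}, by decide⟩ : ProperSub 3).1) :
    ff EB SB B B' j0 j1 j0' j1' ι ⟨{0}, by decide⟩ ⟨{0,1}, by decide⟩ h =
      castEmb (AA_single EB SB B B' (by decide)).symm
        (AA_pair EB SB B B' (Or.inl (by decide))).symm j0 := by
  rfl

lemma ff_1_01 (h : (⟨{1}, by decide⟩ : ProperSub 3).1 ⊆ (⟨{0,1}, by decide⟩ : ProperSub 3).1) :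
    ff EB SB B B' j0 j1 j0' j1' ι ⟨{1}, by decide⟩ ⟨{0,1}, by decide⟩ h =
      castEmb (AA_single EB SB B B' (by decide)).symm
        (AA_pair EB SB B B' (Or.inl (by decide))).symm j1 := by
  rfl

lemma ff_1_12 (h : (⟨{1}, by decide⟩ : ProperSub 3).1 ⊆ (⟨{1,2}, by decide⟩ : ProperSub 3).1) :
    ff EB SB B B' j0 j1 j0' j1' ι ⟨{1}, by decide⟩ ⟨{1,2}, by decide⟩ h =
      castEmb (AA_single EB SB B B' (by decide)).symm
        (AA_pair EB SB B B' (Or.inr (by decide))).symm j0 := by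
  rfl

lemma ff_2_12 (h : (⟨{2}, by decide⟩ : ProperSub 3).1 ⊆ (⟨{1,2}, by decide⟩ : ProperSub 3).1) :
    ff EB SB B B' j0 j1 j0' j1' ι ⟨{2}, by decide⟩ ⟨{1,2}, by decide⟩ h =
      castEmb (AA_single EB SB B B' (by decide)).symm
        (AA_pair EB SB B B' (Or.inr (by decide))).symm j1 := by
  rfl

lemma ff_0_02 (h : (⟨{0}, by decide⟩ : ProperSub 3).1 ⊆ (⟨{0,2}, by decide⟩ : ProperSub 3).1) :
    ff EB SB B B' j0 j1 j0' j1' ι ⟨{0}, by decide⟩ ⟨{0,2}, by decide⟩ h =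
      castEmb (AA_single EB SB B B' (by decide)).symm
        (AA_02 EB SB B B' (by decide)).symm j0' := by
  rfl

lemma ff_2_02 (h : (⟨{2}, by decide⟩ : ProperSub 3).1 ⊆ (⟨{0,2}, by decide⟩ : ProperSub 3).1) :
    ff EB SB B B' j0 j1 j0' j1' ι ⟨{2}, by decide⟩ ⟨{0,2}, by decide⟩ h =
      castEmb (AA_single EB SB B B' (by decide)).symm
        (AA_02 EB SB B B' (by decide)).symm j1' := by
  rfl

end Stmt7Aux3

section Stmt7Aux4

variable {L : FirstOrder.Language.{u, v}} [L.IsRelational]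
variable (EB SB B B' : Bundled.{0} L.Structure)
variable (j0 j1 : SB ↪[L] B) (j0' j1' : SB ↪[L] B') (ι : EB ↪[L] SB)

lemma card_zero_of_chain {p q r : ProperSub 3} (hpq : p.1 ⊆ q.1) (hqr : q.1 ⊆ r.1)
    (h1 : p ≠ q) (h2 : q ≠ r) : p.1 = ∅ := by
  have h1' : p.1 ≠ q.1 := fun hh => h1 (Subtype.ext hh)
  have h2' : q.1 ≠ r.1 := fun hh => h2 (Subtype.ext hh)
  have c1 := Finset.card_lt_card (Finset.ssubset_iff_subset_ne.mpr ⟨hpq, h1'⟩)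
  have c2 := Finset.card_lt_card (Finset.ssubset_iff_subset_ne.mpr ⟨hqr, h2'⟩)
  have c3 := Finset.card_lt_card
    (Finset.ssubset_iff_subset_ne.mpr ⟨Finset.subset_univ r.1, r.2⟩)
  have c4 : (Finset.univ : Finset (Fin 3)).card = 3 := by decide
  exact Finset.card_eq_zero.mp (by omega)

lemma ff_comp (hEe : IsEmpty EB) (p q r : ProperSub 3) (hpq : p.1 ⊆ q.1) (hqr : q.1 ⊆ r.1) :
    ff EB SB B B' j0 j1 j0' j1' ι p r (hpq.trans hqr) =
      (ff EB SB B B' j0 j1 j0' j1' ι q r hqr).comp (ff EB SB B B' j0 j1 j0' j1' ι p q hpq) := by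
  by_cases h1 : p = q
  · subst h1
    rw [ff_self]
    ext x
    rfl
  · by_cases h2 : q = r
    · subst h2
      rw [ff_self]
      ext x
      rfl
    · have hp : p.1 = ∅ := card_zero_of_chain hpq hqr h1 h2
      haveI : IsEmpty (AA EB SB B B' p) := by
        rw [AA_empty EB SB B B' hp]; exact hEe
      ext x
      exact isEmptyElim x

lemma ff_congr {p p' r : ProperSub 3} (hpp : p = p') (h : p.1 ⊆ r.1) (h' : p'.1 ⊆ r.1) :
    Set.range ⇑(ff EB SB B B' j0 j1 j0' j1' ι p r h) =
      Set.range ⇑(ff EB SB B B' j0 j1 j0' j1' ι p' r h') := by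
  subst hpp; rfl

lemma ff_range_empty (hEe : IsEmpty EB) {p r : ProperSub 3} (h : p.1 ⊆ r.1) (hp : p.1 = ∅) :
    Set.range ⇑(ff EB SB B B' j0 j1 j0' j1' ι p r h) = ∅ := by
  haveI : IsEmpty (AA EB SB B B' p) := by rw [AA_empty EB SB B B' hp]; exact hEe
  exact Set.range_eq_empty _

lemma ff_range_sub (hEe : IsEmpty EB) {p q r : ProperSub 3} (hpq : p.1 ⊆ q.1)
    (hqr : q.1 ⊆ r.1) (hpr : p.1 ⊆ r.1) :
    Set.range ⇑(ff EB SB B B' j0 j1 j0' j1' ι p r hpr) ⊆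
      Set.range ⇑(ff EB SB B B' j0 j1 j0' j1' ι q r hqr) := by
  rw [show (ff EB SB B B' j0 j1 j0' j1' ι p r hpr) =
      (ff EB SB B B' j0 j1 j0' j1' ι p r (hpq.trans hqr)) from rfl,
    ff_comp EB SB B B' j0 j1 j0' j1' ι hEe p q r hpq hqr]
  rintro y ⟨x, rfl⟩
  exact ⟨ff EB SB B B' j0 j1 j0' j1' ι p q hpq x, rfl⟩

end Stmt7Aux4

section Stmt7Aux5

variable {L : FirstOrder.Language.{u, v}} [L.IsRelational]
variable (EB SB B B' : Bundled.{0} L.Structure)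
variable (j0 j1 : SB ↪[L] B) (j0' j1' : SB ↪[L] B') (ι : EB ↪[L] SB)

lemma ff_ranges (hEe : IsEmpty EB) (hSne : Nonempty SB)
    {b0 b1 : B} {b0' b1' : B'}
    (hj0 : ∀ z, j0 z = b0) (hj1 : ∀ z, j1 z = b1)
    (hj0' : ∀ z, j0' z = b0') (hj1' : ∀ z, j1' z = b1')
    (hb : b0 ≠ b1) (hb' : b0' ≠ b1') :
    ∀ (p q r : ProperSub 3) (hpr : p.1 ⊆ r.1) (hqr : q.1 ⊆ r.1),
      Set.range ⇑(ff EB SB B B' j0 j1 j0' j1' ι p r hpr) ∩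
          Set.range ⇑(ff EB SB B B' j0 j1 j0' j1' ι q r hqr) =
        Set.range ⇑(ff EB SB B B' j0 j1 j0' j1' ι (interP p q) r
          (Finset.inter_subset_left.trans hpr)) := by
  haveI := hSne
  intro p q r hpr hqr
  by_cases hpq : p.1 ⊆ q.1
  · rw [ff_congr EB SB B B' j0 j1 j0' j1' ι
      (show interP p q = p from Subtype.ext (Finset.inter_eq_left.mpr hpq))
      (Finset.inter_subset_left.trans hpr) hpr]
    exact Set.inter_eq_left.mpr (ff_range_sub EB SB B B' j0 j1 j0' j1' ι hEe hpq hqr hpr)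
  · by_cases hqp : q.1 ⊆ p.1
    · rw [ff_congr EB SB B B' j0 j1 j0' j1' ι
        (show interP p q = q from Subtype.ext (Finset.inter_eq_right.mpr hqp))
        (Finset.inter_subset_left.trans hpr) hqr]
      exact Set.inter_eq_right.mpr (ff_range_sub EB SB B B' j0 j1 j0' j1' ι hEe hqp hpr hqr)
    · have hpe : p.1 ≠ ∅ := fun hh => hpq (by rw [hh]; exact Finset.empty_subset _)
      have hqe : q.1 ≠ ∅ := fun hh => hqp (by rw [hh]; exact Finset.empty_subset _)
      have hpr' : p ≠ r := fun hh => hqp (by rw [hh]; exact hqr)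
      have hqr' : q ≠ r := fun hh => hpq (by rw [hh]; exact hpr)
      have c3 := Finset.card_lt_card
        (Finset.ssubset_iff_subset_ne.mpr ⟨Finset.subset_univ r.1, r.2⟩)
      have c4 : (Finset.univ : Finset (Fin 3)).card = 3 := by decide
      have hp1 : p.1.card = 1 := by
        have c1 := Finset.card_lt_card
          (Finset.ssubset_iff_subset_ne.mpr ⟨hpr, fun hh => hpr' (Subtype.ext hh)⟩)
        have c5 : p.1.card ≠ 0 := fun hh => hpe (Finset.card_eq_zero.mp hh)
        omega
      have hq1 : q.1.card = 1 := by
        have c1 := Finset.card_lt_card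
          (Finset.ssubset_iff_subset_ne.mpr ⟨hqr, fun hh => hqr' (Subtype.ext hh)⟩)
        have c5 : q.1.card ≠ 0 := fun hh => hqe (Finset.card_eq_zero.mp hh)
        omega
      obtain ⟨i, hi⟩ := Finset.card_eq_one.mp hp1
      obtain ⟨j, hj⟩ := Finset.card_eq_one.mp hq1
      have hij : i ≠ j := by rintro rfl; exact hpq (by rw [hi, hj])
      have hijr : ({i, j} : Finset (Fin 3)) ⊆ r.1 := by
        intro x hx
        rcases Finset.mem_insert.mp hx with rfl | hx
        · exact hpr (by rw [hi]; exact Finset.mem_singleton_self _)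
        · rw [Finset.mem_singleton] at hx
          subst hx
          exact hqr (by rw [hj]; exact Finset.mem_singleton_self _)
      have hrij : r.1 = {i, j} :=
        (Finset.eq_of_subset_of_card_le hijr (by rw [Finset.card_pair hij]; omega)).symm
      rcases fin3cases i with rfl | rfl | rfl <;> rcases fin3cases j with rfl | rfl | rfl
      · exact absurd rfl hij
      · -- i = 0, j = 1, r = {0,1}
        obtain rfl : p = (⟨{0}, by decide⟩ : ProperSub 3) := Subtype.ext hi
        obtain rfl : q = (⟨{1}, by decide⟩ : ProperSub 3) := Subtype.ext hj
        obtain rfl : r = (⟨{0,1}, by decide⟩ : ProperSub 3) :=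
          Subtype.ext (hrij.trans (by decide))
        rw [ff_0_01, ff_1_01, castEmb_range, castEmb_range, range_of_const hj0,
          range_of_const hj1, Set.image_singleton, Set.image_singleton]
        refine (Set.singleton_inter_eq_empty.mpr ?_).trans
          (ff_range_empty EB SB B B' j0 j1 j0' j1' ι hEe _
            (show (interP (⟨{0}, by decide⟩ : ProperSub 3) ⟨{1}, by decide⟩).1 = ∅ by decide)).symm
        rw [Set.mem_singleton_iff]
        exact fun hc => hb ((cast_inj _).mp hc)
      · -- i = 0, j = 2, r = {0,2}
        obtain rfl : p = (⟨{0}, by decide⟩ : ProperSub 3) := Subtype.ext hi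
        obtain rfl : q = (⟨{2}, by decide⟩ : ProperSub 3) := Subtype.ext hj
        obtain rfl : r = (⟨{0,2}, by decide⟩ : ProperSub 3) :=
          Subtype.ext (hrij.trans (by decide))
        rw [ff_0_02, ff_2_02, castEmb_range, castEmb_range, range_of_const hj0',
          range_of_const hj1', Set.image_singleton, Set.image_singleton]
        refine (Set.singleton_inter_eq_empty.mpr ?_).trans
          (ff_range_empty EB SB B B' j0 j1 j0' j1' ι hEe _
            (show (interP (⟨{0}, by decide⟩ : ProperSub 3) ⟨{2}, by decide⟩).1 = ∅ by decide)).symm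
        rw [Set.mem_singleton_iff]
        exact fun hc => hb' ((cast_inj _).mp hc)
      · -- i = 1, j = 0, r = {0,1}
        obtain rfl : p = (⟨{1}, by decide⟩ : ProperSub 3) := Subtype.ext hi
        obtain rfl : q = (⟨{0}, by decide⟩ : ProperSub 3) := Subtype.ext hj
        obtain rfl : r = (⟨{0,1}, by decide⟩ : ProperSub 3) :=
          Subtype.ext (hrij.trans (by decide))
        rw [ff_1_01, ff_0_01, castEmb_range, castEmb_range, range_of_const hj1,
          range_of_const hj0, Set.image_singleton, Set.image_singleton]
        refine (Set.singleton_inter_eq_empty.mpr ?_).trans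
          (ff_range_empty EB SB B B' j0 j1 j0' j1' ι hEe _
            (show (interP (⟨{1}, by decide⟩ : ProperSub 3) ⟨{0}, by decide⟩).1 = ∅ by decide)).symm
        rw [Set.mem_singleton_iff]
        exact fun hc => hb (((cast_inj _).mp hc).symm)
      · exact absurd rfl hij
      · -- i = 1, j = 2, r = {1,2}
        obtain rfl : p = (⟨{1}, by decide⟩ : ProperSub 3) := Subtype.ext hi
        obtain rfl : q = (⟨{2}, by decide⟩ : ProperSub 3) := Subtype.ext hj
        obtain rfl : r = (⟨{1,2}, by decide⟩ : ProperSub 3) :=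
          Subtype.ext (hrij.trans (by decide))
        rw [ff_1_12, ff_2_12, castEmb_range, castEmb_range, range_of_const hj0,
          range_of_const hj1, Set.image_singleton, Set.image_singleton]
        refine (Set.singleton_inter_eq_empty.mpr ?_).trans
          (ff_range_empty EB SB B B' j0 j1 j0' j1' ι hEe _
            (show (interP (⟨{1}, by decide⟩ : ProperSub 3) ⟨{2}, by decide⟩).1 = ∅ by decide)).symm
        rw [Set.mem_singleton_iff]
        exact fun hc => hb ((cast_inj _).mp hc)
      · -- i = 2, j = 0, r = {0,2}
        obtain rfl : p = (⟨{2}, by decide⟩ : ProperSub 3) := Subtype.ext hi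
        obtain rfl : q = (⟨{0}, by decide⟩ : ProperSub 3) := Subtype.ext hj
        obtain rfl : r = (⟨{0,2}, by decide⟩ : ProperSub 3) :=
          Subtype.ext (hrij.trans (by decide))
        rw [ff_2_02, ff_0_02, castEmb_range, castEmb_range, range_of_const hj1',
          range_of_const hj0', Set.image_singleton, Set.image_singleton]
        refine (Set.singleton_inter_eq_empty.mpr ?_).trans
          (ff_range_empty EB SB B B' j0 j1 j0' j1' ι hEe _
            (show (interP (⟨{2}, by decide⟩ : ProperSub 3) ⟨{0}, by decide⟩).1 = ∅ by decide)).symm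
        rw [Set.mem_singleton_iff]
        exact fun hc => hb' (((cast_inj _).mp hc).symm)
      · -- i = 2, j = 1, r = {1,2}
        obtain rfl : p = (⟨{2}, by decide⟩ : ProperSub 3) := Subtype.ext hi
        obtain rfl : q = (⟨{1}, by decide⟩ : ProperSub 3) := Subtype.ext hj
        obtain rfl : r = (⟨{1,2}, by decide⟩ : ProperSub 3) :=
          Subtype.ext (hrij.trans (by decide))
        rw [ff_2_12, ff_1_12, castEmb_range, castEmb_range, range_of_const hj1,
          range_of_const hj0, Set.image_singleton, Set.image_singleton]
        refine (Set.singleton_inter_eq_empty.mpr ?_).trans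
          (ff_range_empty EB SB B B' j0 j1 j0' j1' ι hEe _
            (show (interP (⟨{2}, by decide⟩ : ProperSub 3) ⟨{1}, by decide⟩).1 = ∅ by decide)).symm
        rw [Set.mem_singleton_iff]
        exact fun hc => hb (((cast_inj _).mp hc).symm)
      · exact absurd rfl hij

end Stmt7Aux5

section Stmt7Aux6

variable {L : FirstOrder.Language.{u, v}} [L.IsRelational]

lemma singletonEmb {K : StructClass L} (hher : HereditaryC K)
    (hiso : ∀ A B : Bundled.{0} L.Structure, A ∈ K → B ∈ K → Nonempty A → Subsingleton A →
      Nonempty B → Subsingleton B → Nonempty (A ≃[L] B))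
    (SB : Bundled.{0} L.Structure) (hSB : SB ∈ K) (hne : Nonempty SB) (hsub : Subsingleton SB)
    (M : Bundled.{0} L.Structure) (hM : M ∈ K) (x : M) :
    ∃ j : SB ↪[L] M, ∀ z, j z = x := by
  obtain ⟨φ⟩ := hiso SB ⟨({x} : Set M), setStructure L _⟩ hSB (hher M hM {x}) hne hsub
    ⟨⟨x, rfl⟩⟩ ⟨fun a b => Subtype.ext (a.2.trans b.2.symm)⟩
  exact ⟨(inclEmb ({x} : Set M)).comp φ.toEmbedding, fun z => (φ z).2⟩

variable (EB SB B B' : Bundled.{0} L.Structure)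
variable (j0 j1 : SB ↪[L] B) (j0' j1' : SB ↪[L] B') (ι : EB ↪[L] SB)

lemma AA_mem {K : StructClass L} (hEBk : EB ∈ K) (hSBk : SB ∈ K) (hBk : B ∈ K)
    (hB'k : B' ∈ K) : ∀ p, AA EB SB B B' p ∈ K := by
  intro p
  rcases finset3cases p.1 with h | h | h | h | h | h | h | h
  · rw [AA_empty EB SB B B' h]; exact hEBk
  · rw [AA_single EB SB B B' (by rw [h]; decide)]; exact hSBk
  · rw [AA_single EB SB B B' (by rw [h]; decide)]; exact hSBk
  · rw [AA_single EB SB B B' (by rw [h]; decide)]; exact hSBk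
  · rw [AA_pair EB SB B B' (Or.inl h)]; exact hBk
  · rw [AA_02 EB SB B B' h]; exact hB'k
  · rw [AA_pair EB SB B B' (Or.inr h)]; exact hBk
  · exact absurd h p.2

include ι in
lemma stmt7main {E : L.Relations 2} {K : StructClass L}
    (hEBk : EB ∈ K) (hSBk : SB ∈ K) (hBk : B ∈ K) (hB'k : B' ∈ K)
    (hEe : IsEmpty EB) (hSne : Nonempty SB)
    {b0 b1 : B} {b0' b1' : B'}
    (hj0 : ∀ z, j0 z = b0) (hj1 : ∀ z, j1 z = b1)
    (hj0' : ∀ z, j0' z = b0') (hj1' : ∀ z, j1' z = b1')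
    (hb : b0 ≠ b1) (hb' : b0' ≠ b1')
    (hE : RelMap E ![b0, b1]) (hE' : ¬ RelMap E ![b0', b1'])
    (htrans : ∀ A ∈ K, ∀ x y z : A, RelMap E ![x, y] → RelMap E ![y, z] → RelMap E ![x, z])
    (hDA : DisjointNAmalg K 3) : False := by
  haveI := hSne
  obtain ⟨C, hC, g, hgc, -⟩ := hDA (AA EB SB B B') (ff EB SB B B' j0 j1 j0' j1' ι)
    (AA_mem EB SB B B' hEBk hSBk hBk hB'k)
    (fun p h => ff_self EB SB B B' j0 j1 j0' j1' ι p h)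
    (fun p q r hpq hqr => ff_comp EB SB B B' j0 j1 j0' j1' ι hEe p q r hpq hqr)
    (fun p q r hpr hqr =>
      ff_ranges EB SB B B' j0 j1 j0' j1' ι hEe hSne hj0 hj1 hj0' hj1' hb hb' p q r hpr hqr)
  have key : ∀ (ps qs : ProperSub 3) (hpq : ps.1 ⊆ qs.1) (x : AA EB SB B B' ps),
      g qs (ff EB SB B B' j0 j1 j0' j1' ι ps qs hpq x) = g ps x := by
    intro ps qs hpq x
    exact DFunLike.congr_fun (hgc ps qs hpq) x
  set pt0 : (AA EB SB B B' ⟨{0}, by decide⟩ : Type) :=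
    cast (bcast (AA_single EB SB B B' (p := ⟨{0}, by decide⟩) (by decide)).symm)
      (Classical.arbitrary SB) with hpt0
  set pt1 : (AA EB SB B B' ⟨{1}, by decide⟩ : Type) :=
    cast (bcast (AA_single EB SB B B' (p := ⟨{1}, by decide⟩) (by decide)).symm)
      (Classical.arbitrary SB) with hpt1
  set pt2 : (AA EB SB B B' ⟨{2}, by decide⟩ : Type) :=
    cast (bcast (AA_single EB SB B B' (p := ⟨{2}, by decide⟩) (by decide)).symm)
      (Classical.arbitrary SB) with hpt2
  have hrel01 : RelMap E ![g ⟨{0}, by decide⟩ pt0, g ⟨{1}, by decide⟩ pt1] := by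
    have h1 := key ⟨{0}, by decide⟩ ⟨{0,1}, by decide⟩ (by decide) pt0
    have h2 := key ⟨{1}, by decide⟩ ⟨{0,1}, by decide⟩ (by decide) pt1
    rw [ff_0_01, castEmb_apply, hj0] at h1
    rw [ff_1_01, castEmb_apply, hj1] at h2
    rw [← h1, ← h2]
    exact (map_rel2 (g ⟨{0,1}, by decide⟩) E _ _).mpr
      ((relMap_cast2 (AA_pair EB SB B B' (p := ⟨{0,1}, by decide⟩)
        (Or.inl (by decide))).symm E b0 b1).mpr hE)
  have hrel12 : RelMap E ![g ⟨{1}, by decide⟩ pt1, g ⟨{2}, by decide⟩ pt2] := by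
    have h1 := key ⟨{1}, by decide⟩ ⟨{1,2}, by decide⟩ (by decide) pt1
    have h2 := key ⟨{2}, by decide⟩ ⟨{1,2}, by decide⟩ (by decide) pt2
    rw [ff_1_12, castEmb_apply, hj0] at h1
    rw [ff_2_12, castEmb_apply, hj1] at h2
    rw [← h1, ← h2]
    exact (map_rel2 (g ⟨{1,2}, by decide⟩) E _ _).mpr
      ((relMap_cast2 (AA_pair EB SB B B' (p := ⟨{1,2}, by decide⟩)
        (Or.inr (by decide))).symm E b0 b1).mpr hE)
  have hrel02 : ¬ RelMap E ![g ⟨{0}, by decide⟩ pt0, g ⟨{2}, by decide⟩ pt2] := by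
    intro hcon
    have h1 := key ⟨{0}, by decide⟩ ⟨{0,2}, by decide⟩ (by decide) pt0
    have h2 := key ⟨{2}, by decide⟩ ⟨{0,2}, by decide⟩ (by decide) pt2
    rw [ff_0_02, castEmb_apply, hj0'] at h1
    rw [ff_2_02, castEmb_apply, hj1'] at h2
    rw [← h1, ← h2] at hcon
    exact hE' ((relMap_cast2 (AA_02 EB SB B B' (p := ⟨{0,2}, by decide⟩)
      (by decide)).symm E b0' b1').mp ((map_rel2 (g ⟨{0,2}, by decide⟩) E _ _).mp hcon))
  exact hrel02 (htrans C hC _ _ _ hrel01 hrel12)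

end Stmt7Aux6

/-- a class with a transitive binary relation realizing both an edge and a
non-edge does not have disjoint 3-amalgamation. -/
theorem stmt7 (L : FirstOrder.Language.{u, v}) [L.IsRelational] (E : L.Relations 2)
    (K : StructClass L)
    (hfin : AllFinite K) (hiso : IsoClosed K) (hher : HereditaryC K)
    (hsing : UniqueSingleton K)
    (htrans : ∀ A ∈ K, ∀ x y z : A, RelMap E ![x, y] → RelMap E ![y, z] → RelMap E ![x, z])
    (hA0 : ∃ A ∈ K, ∃ e : Fin 2 ≃ A, RelMap E ![e 0, e 1])
    (hA1 : ∃ A ∈ K, ∃ e : Fin 2 ≃ A, ¬ RelMap E ![e 0, e 1]) :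
    ¬ DisjointNAmalg K 3 := by
  intro hDA
  obtain ⟨B, hBk, e, hE⟩ := hA0
  obtain ⟨B', hB'k, e', hE'⟩ := hA1
  set EB : Bundled.{0} L.Structure := ⟨((∅ : Set B) : Type), setStructure L _⟩ with hEB
  set SB : Bundled.{0} L.Structure := ⟨(({e 0} : Set B) : Type), setStructure L _⟩ with hSB
  have hEBk : EB ∈ K := hher B hBk ∅
  have hSBk : SB ∈ K := hher B hBk {e 0}
  have hEe : IsEmpty EB := ⟨fun x => x.2⟩
  have hSne : Nonempty SB := ⟨⟨e 0, rfl⟩⟩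
  have hSsub : Subsingleton SB := ⟨fun a b => Subtype.ext (a.2.trans b.2.symm)⟩
  have hj0ex : ∃ j : SB ↪[L] B, ∀ z, j z = e 0 := ⟨inclEmb ({e 0} : Set B), fun z => z.2⟩
  obtain ⟨j0, hj0⟩ := hj0ex
  obtain ⟨j1, hj1⟩ := singletonEmb hher hsing.2 SB hSBk hSne hSsub B hBk (e 1)
  obtain ⟨j0', hj0'⟩ := singletonEmb hher hsing.2 SB hSBk hSne hSsub B' hB'k (e' 0)
  obtain ⟨j1', hj1'⟩ := singletonEmb hher hsing.2 SB hSBk hSne hSsub B' hB'k (e' 1)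
  have ι : EB ↪[L] SB := incl2Emb (Set.empty_subset ({e 0} : Set B))
  have hb : e 0 ≠ e 1 := fun hh => absurd (e.injective hh) (by decide)
  have hb' : e' 0 ≠ e' 1 := fun hh => absurd (e'.injective hh) (by decide)
  exact stmt7main EB SB B B' j0 j1 j0' j1' ι hEBk hSBk hBk hB'k hEe hSne
    hj0 hj1 hj0' hj1' hb hb' hE hE' htrans hDA

end ProductsPaper
end

section
/- Let L0 and L1 be relational languages, let A be an L0-structure, and let B be an L1-structure. Then the age of the full product A ⊠ B equals the full product of the classes age(A) ⊠ age(B). -/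
/- Definitions following "Products of Classes of Finite Structures"
   (Guingona, Parnes, Scow). -/

open CategoryTheory FirstOrder FirstOrder.Language FirstOrder.Language.Structure

universe u v w w' u0 v0 u1 v1

namespace ProductsPaper

variable {L : FirstOrder.Language.{u, v}}

variable {L0 : FirstOrder.Language.{u0, v0}} {L1 : FirstOrder.Language.{u1, v1}}

/- A finite substructure `C` of `A ⊠ B` lies inside `π₀(C) ⊠ π₁(C)`, since the relations of
the product only look at coordinates and `E0`, `E1` record equality of coordinates; the
projections `π₀(C)`, `π₁(C)` are finite substructures of `A` and `B`. Conversely, embeddings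
`A' ↪ A` and `B' ↪ B` induce an embedding `A' ⊠ B' ↪ A ⊠ B`. -/

section AgeFullProd

variable {L0 : FirstOrder.Language.{u0, v0}} {L1 : FirstOrder.Language.{u1, v1}}
variable [L0.IsRelational] [L1.IsRelational]

def subtypeEmbedding (L : FirstOrder.Language.{u, v}) [L.IsRelational] {M : Type w}
    [L.Structure M] (s : Set M) : s ↪[L] M where
  toFun := Subtype.val
  inj' := Subtype.val_injective
  map_fun' := fun f => isEmptyElim f
  map_rel' := fun _ _ => Iff.rfl

-- `X` may live in any universe, while the members of `ageC L M` live in `Type`.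
lemma exists_equiv_mem_ageC {L : FirstOrder.Language.{u, v}} {M : Type w} [L.Structure M]
    {X : Type w'} [L.Structure X] [Finite X] (e : X ↪[L] M) :
    ∃ N ∈ ageC L M, Nonempty (X ≃[L] N) := by
  obtain ⟨n, ⟨q⟩⟩ := Finite.exists_equiv_fin X
  let : L.Structure (Fin n) := q.inducedStructure
  exact ⟨⟨Fin n, q.inducedStructure⟩,
    ⟨Finite.of_fintype _, ⟨e.comp (q.inducedStructureEquiv (L := L)).symm.toEmbedding⟩⟩,
    ⟨q.inducedStructureEquiv⟩⟩

def fullProdMap {A A' B B' : Type*}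
    [L0.Structure A] [L0.Structure A'] [L1.Structure B] [L1.Structure B']
    (f : A ↪[L0] A') (g : B ↪[L1] B') :
    fullProd L0 L1 A B ↪[fullLang L0 L1] fullProd L0 L1 A' B' where
  toFun x := (f x.1, g x.2)
  inj' := fun _ _ h =>
    Prod.ext (f.injective (Prod.ext_iff.mp h).1) (g.injective (Prod.ext_iff.mp h).2)
  map_fun' := fun F => isEmptyElim F
  map_rel' := by
    intro n R x
    rcases R with (R | R) | (R | R)
    · exact f.map_rel R _
    · exact g.map_rel R _
    · cases R
      exact f.injective.eq_iff
    · cases R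
      exact g.injective.eq_iff

def fullProdRangeRestrict {C A B : Type*} [(fullLang L0 L1).Structure C]
    [L0.Structure A] [L1.Structure B] (e : C ↪[fullLang L0 L1] fullProd L0 L1 A B) :
    C ↪[fullLang L0 L1]
      fullProd L0 L1 (Set.range fun c => (e c).1) (Set.range fun c => (e c).2) where
  toFun c := (⟨(e c).1, c, rfl⟩, ⟨(e c).2, c, rfl⟩)
  inj' := fun _ _ h =>
    e.injective (Prod.ext (congrArg Subtype.val (Prod.ext_iff.mp h).1)
      (congrArg Subtype.val (Prod.ext_iff.mp h).2))
  map_fun' := fun F => isEmptyElim F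
  map_rel' := by
    intro n R x
    rcases R with (R | R) | (R | R)
    · exact e.map_rel (Sum.inl (Sum.inl R)) x
    · exact e.map_rel (Sum.inl (Sum.inr R)) x
    · cases R
      exact Subtype.ext_iff.trans (e.map_rel (Sum.inr (Sum.inl .adj)) x)
    · cases R
      exact Subtype.ext_iff.trans (e.map_rel (Sum.inr (Sum.inr .adj)) x)

lemma ageC_fullProd_subset (A : Type w) [L0.Structure A] (B : Type w') [L1.Structure B] :
    ageC (fullLang L0 L1) (fullProd L0 L1 A B) ⊆ fullClass (ageC L0 A) (ageC L1 B) := by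
  rintro C ⟨hC, ⟨e⟩⟩
  have : Finite C := hC
  obtain ⟨A', hA', ⟨φ⟩⟩ :=
    exists_equiv_mem_ageC (subtypeEmbedding L0 (Set.range fun c => (e c).1))
  obtain ⟨B', hB', ⟨ψ⟩⟩ :=
    exists_equiv_mem_ageC (subtypeEmbedding L1 (Set.range fun c => (e c).2))
  exact ⟨hC, A', hA', B', hB',
    ⟨(fullProdMap φ.toEmbedding ψ.toEmbedding).comp (fullProdRangeRestrict e)⟩⟩

lemma fullClass_ageC_subset (A : Type w) [L0.Structure A] (B : Type w') [L1.Structure B] :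
    fullClass (ageC L0 A) (ageC L1 B) ⊆ ageC (fullLang L0 L1) (fullProd L0 L1 A B) := by
  rintro C ⟨hC, A', ⟨-, ⟨f⟩⟩, B', ⟨-, ⟨g⟩⟩, ⟨e⟩⟩
  exact ⟨hC, ⟨(fullProdMap f g).comp e⟩⟩

end AgeFullProd

/-- the age of a full product is the full product of ages. -/
theorem stmt9 (L0 : FirstOrder.Language.{u0, v0}) (L1 : FirstOrder.Language.{u1, v1})
    [L0.IsRelational] [L1.IsRelational]
    (A : Type w) [L0.Structure A] (B : Type w') [L1.Structure B] :
    ageC (fullLang L0 L1) (fullProd L0 L1 A B) = fullClass (ageC L0 A) (ageC L1 B) :=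
  (ageC_fullProd_subset A B).antisymm (fullClass_ageC_subset A B)

end ProductsPaper
end

section
/- Let L0 and L1 be relational languages and, for each t < 2, let K_t be a Fraïssé class of finite L_t-structures. Let M0 be a Fraïssé limit of K0 and M1 a Fraïssé limit of K1. Then K0 ⊠ K1 is a Fraïssé class and M0 ⊠ M1 is a Fraïssé limit of K0 ⊠ K1. -/
/- Definitions following "Products of Classes of Finite Structures"
   (Guingona, Parnes, Scow). -/

open CategoryTheory FirstOrder FirstOrder.Language FirstOrder.Language.Structure

universe u v w w' u0 v0 u1 v1

namespace ProductsPaper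

variable {L : FirstOrder.Language.{u, v}}

variable {L0 : FirstOrder.Language.{u0, v0}} {L1 : FirstOrder.Language.{u1, v1}}

/-! Everything in a full product is read off coordinatewise. An embedding of a finite structure
`C` into `M0 ⊠ M1` factors through the product of its two coordinate projections, which are
finite substructures of `M0` and `M1`; hence the age of `M0 ⊠ M1` is `age M0 ⊠ age M1`.
A finite partial isomorphism `f` of `M0 ⊠ M1` preserves `E0` and `E1`, so it induces partial
isomorphisms of the coordinate projections of its domain; extending these to automorphisms
`g0`, `g1` of `M0` and `M1`, the automorphism `g0 × g1` extends `f`. Finally, the age of a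
countable ultrahomogeneous structure is a Fraïssé class: two finite structures over a common
one are amalgamated inside `M` after moving one of them by an automorphism. -/

section Age

variable {L : FirstOrder.Language.{u, v}} [L.IsRelational] {M : Type w} [L.Structure M]

def setEmb (s : Set M) : s ↪[L] M where
  toFun := Subtype.val
  inj' := Subtype.val_injective
  map_fun' f _ := isEmptyElim f
  map_rel' _ _ := Iff.rfl

def codRestrictEmb {A : Type*} [L.Structure A] (s : Set M) (f : A ↪[L] M)
    (h : ∀ a, f a ∈ s) : A ↪[L] s where
  toFun a := ⟨f a, h a⟩
  inj' _ _ hab := f.injective (congrArg Subtype.val hab)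
  map_fun' g _ := isEmptyElim g
  map_rel' := f.map_rel'

noncomputable def equivRangeEmb {A : Type*} [L.Structure A] (f : A ↪[L] M) :
    A ≃[L] Set.range f where
  toEquiv := Equiv.ofBijective (fun a => ⟨f a, Set.mem_range_self a⟩)
    ⟨fun _ _ h => f.injective (congrArg Subtype.val h),
      fun x => x.2.elim fun a ha => ⟨a, Subtype.ext ha⟩⟩
  map_fun' g _ := isEmptyElim g
  map_rel' := f.map_rel'

/-- A copy in `Type 0` of a finite subset of `M`, so that it can be a member of `ageC L M`. -/
noncomputable def copyBundle (s : Set M) (hs : s.Finite) : Bundled.{0} L.Structure :=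
  haveI := hs.to_subtype
  (Finite.equivFin s).bundledInduced L

noncomputable def copyIso (s : Set M) (hs : s.Finite) : s ≃[L] copyBundle (L := L) s hs :=
  haveI := hs.to_subtype
  (Finite.equivFin s).bundledInducedEquiv L

lemma copyBundle_mem_ageC (s : Set M) (hs : s.Finite) :
    copyBundle (L := L) s hs ∈ ageC L M := by
  have := hs.to_subtype
  exact ⟨Finite.of_equiv _ (copyIso s hs).toEquiv,
    ⟨(setEmb s).comp (copyIso s hs).symm.toEmbedding⟩⟩

lemma ageC_nonempty : (ageC L M).Nonempty :=
  ⟨_, copyBundle_mem_ageC ∅ Set.finite_empty⟩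

lemma hereditaryC_ageC : HereditaryC (ageC L M) := by
  rintro A ⟨hA, ⟨f⟩⟩ s
  have : Finite A := hA
  exact ⟨inferInstance, ⟨f.comp (setEmb s)⟩⟩

lemma essentiallyCountable_ageC [Countable M] : EssentiallyCountable (ageC L M) := by
  have := (Set.Countable.ofPred_finite (α := M)).to_subtype
  refine ⟨Set.range fun s : {s : Set M | s.Finite} => copyBundle (L := L) s.1 s.2,
    Set.countable_range _, ?_⟩
  rintro A ⟨hA, ⟨f⟩⟩
  have : Finite A := hA
  exact ⟨_, ⟨⟨_, Set.finite_range f⟩, rfl⟩, ⟨(copyIso _ _).comp (equivRangeEmb f)⟩⟩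

lemma exists_mem_ageC_factor {B₀ B₁ : Type*} [L.Structure B₀] [L.Structure B₁]
    [Finite B₀] [Finite B₁] (e₀ : B₀ ↪[L] M) (e₁ : B₁ ↪[L] M) :
    ∃ C ∈ ageC L M, ∃ (g₀ : B₀ ↪[L] C) (g₁ : B₁ ↪[L] C) (h : C ↪[L] M),
      h.comp g₀ = e₀ ∧ h.comp g₁ = e₁ := by
  have hs : (Set.range e₀ ∪ Set.range e₁).Finite :=
    (Set.finite_range e₀).union (Set.finite_range e₁)
  refine ⟨copyBundle _ hs, copyBundle_mem_ageC _ hs,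
    (copyIso _ hs).toEmbedding.comp
      (codRestrictEmb _ e₀ fun b => Set.mem_union_left _ (Set.mem_range_self b)),
    (copyIso _ hs).toEmbedding.comp
      (codRestrictEmb _ e₁ fun b => Set.mem_union_right _ (Set.mem_range_self b)),
    (setEmb _).comp (copyIso _ hs).symm.toEmbedding, ?_, ?_⟩ <;>
  · ext b
    simp only [Embedding.comp_apply, Language.Equiv.coe_toEmbedding,
      Language.Equiv.symm_apply_apply]
    rfl

lemma jep_ageC : JEP (ageC L M) := by
  rintro A ⟨hA, ⟨e₀⟩⟩ B ⟨hB, ⟨e₁⟩⟩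
  have : Finite A := hA
  have : Finite B := hB
  obtain ⟨C, hC, g₀, g₁, -⟩ := exists_mem_ageC_factor e₀ e₁
  exact ⟨C, hC, ⟨g₀⟩, ⟨g₁⟩⟩

lemma ap_ageC (hM : Ultrahomogeneous L M) : AP (ageC L M) := by
  rintro A B₀ B₁ ⟨hA, -⟩ ⟨hB₀, ⟨e₀⟩⟩ ⟨hB₁, ⟨e₁⟩⟩ f₀ f₁
  have : Finite A := hA
  have : Finite B₀ := hB₀
  have : Finite B₁ := hB₁
  let α := equivRangeEmb (e₀.comp f₀)
  obtain ⟨σ, hσ⟩ := hM _ (Set.finite_range _) ((e₁.comp f₁).comp α.symm.toEmbedding)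
  have hσ_agree : ∀ a, σ (e₀ (f₀ a)) = e₁ (f₁ a) := fun a =>
    (hσ (α a)).trans (congrArg (e₁.comp f₁) (α.symm_apply_apply a))
  obtain ⟨C, hC, g₀, g₁, h, hg₀, hg₁⟩ := exists_mem_ageC_factor (σ.toEmbedding.comp e₀) e₁
  refine ⟨C, hC, g₀, g₁, Embedding.ext fun a => h.injective ?_⟩
  have h₀ := DFunLike.congr_fun hg₀ (f₀ a)
  have h₁ := DFunLike.congr_fun hg₁ (f₁ a)
  simp only [Embedding.comp_apply, Language.Equiv.coe_toEmbedding] at h₀ h₁ ⊢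
  rw [h₀, h₁, hσ_agree]

theorem fraisseClass_ageC [Countable M] (hM : Ultrahomogeneous L M) : FraisseClass (ageC L M) :=
  ⟨ageC_nonempty, essentiallyCountable_ageC, hereditaryC_ageC, jep_ageC, ap_ageC hM⟩

/-- The map `p c ↦ q c` on the range of `p`. -/
noncomputable def rangeFactorEmb {C : Type*} {N : Type*} [L.Structure N] (p : C → M) (q : C → N)
    (hpq : ∀ c c', p c = p c' ↔ q c = q c')
    (hR : ∀ {n} (R : L.Relations n) (x : Fin n → C), RelMap R (q ∘ x) ↔ RelMap R (p ∘ x)) :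
    Set.range p ↪[L] N where
  toFun a := q a.2.choose
  inj' a b h := Subtype.ext (a.2.choose_spec.symm.trans (((hpq _ _).2 h).trans b.2.choose_spec))
  map_fun' g _ := isEmptyElim g
  map_rel' {n} R x := by
    have hx : p ∘ (fun i => (x i).2.choose) = fun i => (x i : M) :=
      funext fun i => (x i).2.choose_spec
    exact (hR R _).trans (by rw [hx]; rfl)

lemma rangeFactorEmb_apply {C : Type*} {N : Type*} [L.Structure N] (p : C → M) (q : C → N)
    (hpq : ∀ c c', p c = p c' ↔ q c = q c')
    (hR : ∀ {n} (R : L.Relations n) (x : Fin n → C), RelMap R (q ∘ x) ↔ RelMap R (p ∘ x))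
    (c : C) : rangeFactorEmb p q hpq hR ⟨p c, c, rfl⟩ = q c :=
  (hpq _ _).1 (Exists.choose_spec (p := fun c' => p c' = p c) ⟨c, rfl⟩)

end Age

section FullProduct

variable {L0 : FirstOrder.Language.{u0, v0}} {L1 : FirstOrder.Language.{u1, v1}}
variable [L0.IsRelational] [L1.IsRelational]

def prodEmb {X0 Y0 X1 Y1 : Type*} [L0.Structure X0] [L0.Structure Y0] [L1.Structure X1]
    [L1.Structure Y1] (g0 : X0 ↪[L0] Y0) (g1 : X1 ↪[L1] Y1) :
    fullProd L0 L1 X0 X1 ↪[fullLang L0 L1] fullProd L0 L1 Y0 Y1 where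
  toFun p := (g0 p.1, g1 p.2)
  inj' p q h :=
    Prod.ext (g0.injective (congrArg Prod.fst h)) (g1.injective (congrArg Prod.snd h))
  map_fun' f _ := isEmptyElim f
  map_rel' := by
    rintro n ((R | R) | (R | R)) x
    · exact g0.map_rel' R fun i => (x i).1
    · exact g1.map_rel' R fun i => (x i).2
    · cases R
      exact g0.injective.eq_iff
    · cases R
      exact g1.injective.eq_iff

def prodIso {X0 Y0 X1 Y1 : Type*} [L0.Structure X0] [L0.Structure Y0] [L1.Structure X1]
    [L1.Structure Y1] (g0 : X0 ≃[L0] Y0) (g1 : X1 ≃[L1] Y1) :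
    fullProd L0 L1 X0 X1 ≃[fullLang L0 L1] fullProd L0 L1 Y0 Y1 where
  toEquiv := Equiv.prodCongr g0.toEquiv g1.toEquiv
  map_fun' f _ := isEmptyElim f
  map_rel' := (prodEmb g0.toEmbedding g1.toEmbedding).map_rel'

variable {M0 : Type w} [L0.Structure M0] {M1 : Type w'} [L1.Structure M1]

def rangeProdEmb {C : Type*} [(fullLang L0 L1).Structure C]
    (f : C ↪[fullLang L0 L1] fullProd L0 L1 M0 M1) :
    C ↪[fullLang L0 L1]
      fullProd L0 L1 (Set.range fun c => (f c).1) (Set.range fun c => (f c).2) where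
  toFun c := (⟨(f c).1, c, rfl⟩, ⟨(f c).2, c, rfl⟩)
  inj' c c' h := f.injective (Prod.ext (congrArg (fun p => (p.1 : M0)) h)
    (congrArg (fun p => (p.2 : M1)) h))
  map_fun' g _ := isEmptyElim g
  map_rel' := by
    rintro n ((R | R) | (R | R)) x
    · exact f.map_rel' (Sum.inl (Sum.inl R)) x
    · exact f.map_rel' (Sum.inl (Sum.inr R)) x
    · cases R
      exact Subtype.ext_iff.trans (f.map_rel' (Sum.inr (Sum.inl .adj)) x)
    · cases R
      exact Subtype.ext_iff.trans (f.map_rel' (Sum.inr (Sum.inr .adj)) x)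

lemma ageC_fullProd :
    ageC (fullLang L0 L1) (fullProd L0 L1 M0 M1) = fullClass (ageC L0 M0) (ageC L1 M1) := by
  ext C
  constructor
  · rintro ⟨hC, ⟨f⟩⟩
    have : Finite C := hC
    have h0 : (Set.range fun c => (f c).1).Finite := Set.finite_range _
    have h1 : (Set.range fun c => (f c).2).Finite := Set.finite_range _
    exact ⟨hC, _, copyBundle_mem_ageC _ h0, _, copyBundle_mem_ageC _ h1,
      ⟨(prodEmb (copyIso _ h0).toEmbedding (copyIso _ h1).toEmbedding).comp (rangeProdEmb f)⟩⟩
  · rintro ⟨hC, A, ⟨-, ⟨fA⟩⟩, B, ⟨-, ⟨fB⟩⟩, ⟨e⟩⟩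
    exact ⟨hC, ⟨(prodEmb fA fB).comp e⟩⟩

lemma ultrahomogeneous_fullProd (hM0 : Ultrahomogeneous L0 M0) (hM1 : Ultrahomogeneous L1 M1) :
    Ultrahomogeneous (fullLang L0 L1) (fullProd L0 L1 M0 M1) := by
  intro s hs f
  have := hs.to_subtype
  have hE0 : ∀ x y : s, x.1.1 = y.1.1 ↔ (f x).1 = (f y).1 :=
    fun x y => (f.map_rel' (Sum.inr (Sum.inl .adj)) ![x, y]).symm
  have hE1 : ∀ x y : s, x.1.2 = y.1.2 ↔ (f x).2 = (f y).2 :=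
    fun x y => (f.map_rel' (Sum.inr (Sum.inr .adj)) ![x, y]).symm
  let f0 := rangeFactorEmb (fun x : s => x.1.1) (fun x => (f x).1) hE0
    fun R x => f.map_rel' (Sum.inl (Sum.inl R)) x
  let f1 := rangeFactorEmb (fun x : s => x.1.2) (fun x => (f x).2) hE1
    fun R x => f.map_rel' (Sum.inl (Sum.inr R)) x
  obtain ⟨g0, hg0⟩ := hM0 _ (Set.finite_range _) f0
  obtain ⟨g1, hg1⟩ := hM1 _ (Set.finite_range _) f1
  refine ⟨prodIso g0 g1, fun x => Prod.ext ?_ ?_⟩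
  · exact (hg0 ⟨_, x, rfl⟩).trans (rangeFactorEmb_apply _ _ hE0 _ x)
  · exact (hg1 ⟨_, x, rfl⟩).trans (rangeFactorEmb_apply _ _ hE1 _ x)

theorem isFraisseLimitC_fullProd {K0 : StructClass L0} {K1 : StructClass L1}
    (hM0 : IsFraisseLimitC K0 M0) (hM1 : IsFraisseLimitC K1 M1) :
    IsFraisseLimitC (fullClass K0 K1) (fullProd L0 L1 M0 M1) := by
  obtain ⟨hc0, hu0, rfl⟩ := hM0
  obtain ⟨hc1, hu1, rfl⟩ := hM1
  exact ⟨inferInstanceAs (Countable (M0 × M1)), ultrahomogeneous_fullProd hu0 hu1, ageC_fullProd⟩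

end FullProduct

theorem stmt11_general (L0 : FirstOrder.Language.{u0, v0}) (L1 : FirstOrder.Language.{u1, v1})
    [L0.IsRelational] [L1.IsRelational]
    (K0 : StructClass L0) (K1 : StructClass L1)
    (M0 : Type w) [L0.Structure M0] (M1 : Type w') [L1.Structure M1]
    (hM0 : IsFraisseLimitC K0 M0) (hM1 : IsFraisseLimitC K1 M1) :
    FraisseClass (fullClass K0 K1) ∧
      IsFraisseLimitC (fullClass K0 K1) (fullProd L0 L1 M0 M1) := by
  have hM := isFraisseLimitC_fullProd hM0 hM1
  have := hM.1
  exact ⟨hM.2.2 ▸ fraisseClass_ageC hM.2.1, hM⟩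

/-- the full product of Fraïssé classes is a Fraïssé class, with the full
product of the limits as its Fraïssé limit. -/
theorem stmt11 (L0 : FirstOrder.Language.{u0, v0}) (L1 : FirstOrder.Language.{u1, v1})
    [L0.IsRelational] [L1.IsRelational]
    (K0 : StructClass L0) (K1 : StructClass L1)
    (hfin0 : AllFinite K0) (hiso0 : IsoClosed K0)
    (hfin1 : AllFinite K1) (hiso1 : IsoClosed K1)
    (h0 : FraisseClass K0) (h1 : FraisseClass K1)
    (M0 : Type w) [L0.Structure M0] (M1 : Type w') [L1.Structure M1]
    (hM0 : IsFraisseLimitC K0 M0) (hM1 : IsFraisseLimitC K1 M1) :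
    FraisseClass (fullClass K0 K1) ∧
      IsFraisseLimitC (fullClass K0 K1) (fullProd L0 L1 M0 M1) :=
  stmt11_general L0 L1 K0 K1 M0 M1 hM0 hM1

end ProductsPaper
end

section
/- Let L0 be a relational language and let K be a class of finite L0-structures closed under isomorphism. Let L be a language, let M be an infinite L-structure, and let n < ω. If there exists a K-configuration into M^n, then there exists an injective K-configuration into M^{n+1}. -/
/- Definitions following "Products of Classes of Finite Structures"
   (Guingona, Parnes, Scow). -/

open CategoryTheory FirstOrder FirstOrder.Language FirstOrder.Language.Structure

universe u v w w' u0 v0 u1 v1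

namespace ProductsPaper

variable {L : FirstOrder.Language.{u, v}}

variable {L0 : FirstOrder.Language.{u0, v0}} {L1 : FirstOrder.Language.{u1, v1}}

/- The configuration is kept on the first `n` coordinates, while the last one
carries an arbitrary injection of the finite structure `A` into the infinite `M`; the
interpreting formulas never look at the new coordinate, and `f_A` becomes injective. -/

theorem Finite.exists_injective_of_infinite {α : Type*} [Finite α] (M : Type*) [Infinite M] :
    ∃ g : α → M, Function.Injective g :=
  ⟨_, ((Finite.equivFin α).toEmbedding.trans
    (Fin.valEmbedding.trans (Infinite.natEmbedding M))).injective⟩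

namespace Config

variable {K : StructClass L0} {L : FirstOrder.Language.{u, v}} {M : Type w} [L.Structure M]
  {n : ℕ}

def snoc (c : Config L0 K L M n) (g : ∀ A : Bundled.{0} L0.Structure, A ∈ K → A → M) :
    Config L0 K L M (n + 1) where
  I R := (c.I R).relabel (Sum.map (Prod.map id Fin.castSucc) id)
  f A hA a := Fin.snoc (c.f A hA a) (g A hA a)
  compat A hA m R a := by
    rw [c.compat A hA R a, Formula.realize_relabel]
    refine iff_of_eq (congrArg _ (funext ?_))
    rintro (⟨i, j⟩ | x)
    · simp only [Function.comp_apply, Sum.map_inl, Prod.map_fst, Prod.map_snd, id_eq,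
        Sum.elim_inl, Fin.snoc_castSucc]
    · rfl

theorem snoc_injective (c : Config L0 K L M n)
    {g : ∀ A : Bundled.{0} L0.Structure, A ∈ K → A → M}
    (hg : ∀ A hA, Function.Injective (g A hA)) : (c.snoc g).Injective :=
  fun A hA _ _ hab => hg A hA (by simpa [snoc] using congrFun hab (Fin.last n))

end Config

theorem stmt13_general (L0 : FirstOrder.Language.{u0, v0}) (K : StructClass L0)
    (hfin : AllFinite K)
    (L : FirstOrder.Language.{u, v}) (M : Type w) [L.Structure M] [Infinite M] (n : ℕ)
    (h : Nonempty (Config L0 K L M n)) :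
    ∃ c : Config L0 K L M (n + 1), c.Injective := by
  obtain ⟨c⟩ := h
  choose g hg using fun A (hA : A ∈ K) =>
    have := hfin A hA
    Finite.exists_injective_of_infinite (α := A) M
  exact ⟨c.snoc g, c.snoc_injective hg⟩

/-- from a configuration into `M^n` (for infinite `M`), one obtains an injective
configuration into `M^(n+1)`. -/
theorem stmt13 (L0 : FirstOrder.Language.{u0, v0}) (K : StructClass L0)
    (hfin : AllFinite K) (hiso : IsoClosed K)
    (L : FirstOrder.Language.{u, v}) (M : Type w) [L.Structure M] [Infinite M] (n : ℕ)
    (h : Nonempty (Config L0 K L M n)) :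
    ∃ c : Config L0 K L M (n + 1), c.Injective :=
  stmt13_general L0 K hfin L M n h

end ProductsPaper
end

section
/- Let L0 and L1 be relational languages and, for each t < 2, let K_t be a class of finite L_t-structures closed under isomorphism. Let L be a language, M an L-structure, and n_0, n_1 < ω. If there exists an injective K0-configuration into M^{n_0} and an injective K1-configuration into M^{n_1}, then there exists a (K0 ⊠ K1)-configuration into M^{n_0 + n_1}. -/
/- Definitions following "Products of Classes of Finite Structures"
   (Guingona, Parnes, Scow). -/

open CategoryTheory FirstOrder FirstOrder.Language FirstOrder.Language.Structure

universe u v w w' u0 v0 u1 v1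

namespace ProductsPaper

variable {L : FirstOrder.Language.{u, v}}

variable {L0 : FirstOrder.Language.{u0, v0}} {L1 : FirstOrder.Language.{u1, v1}}

section Aux

variable {L0 : FirstOrder.Language.{u0, v0}} {L1 : FirstOrder.Language.{u1, v1}}
  [L0.IsRelational] [L1.IsRelational]
  {K0 : StructClass L0} {K1 : StructClass L1}
  {L : FirstOrder.Language.{u, v}} {M : Type w} [L.Structure M] {n0 n1 : ℕ}

/-- The interpretation for the full-product configuration. -/
noncomputable def prodInterp (c0 : Config L0 K0 L M n0) (c1 : Config L1 K1 L M n1) :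
    ∀ {m : ℕ}, (fullLang L0 L1).Relations m → L.Formula ((Fin m × Fin (n0 + n1)) ⊕ M) :=
  fun {m} R =>
    match m, R with
    | _, Sum.inl (Sum.inl R) =>
        (c0.I R).relabel (Sum.map (fun p => (p.1, Fin.castAdd n1 p.2)) id)
    | _, Sum.inl (Sum.inr R) =>
        (c1.I R).relabel (Sum.map (fun p => (p.1, Fin.natAdd n0 p.2)) id)
    | _, Sum.inr (Sum.inl .adj) =>
        BoundedFormula.iInf (fun j : Fin n0 =>
          Term.equal (Term.var (Sum.inl ((0 : Fin 2), Fin.castAdd n1 j)))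
            (Term.var (Sum.inl ((1 : Fin 2), Fin.castAdd n1 j))))
    | _, Sum.inr (Sum.inr .adj) =>
        BoundedFormula.iInf (fun j : Fin n1 =>
          Term.equal (Term.var (Sum.inl ((0 : Fin 2), Fin.natAdd n0 j)))
            (Term.var (Sum.inl ((1 : Fin 2), Fin.natAdd n0 j))))

/-- A chosen first factor witnessing membership in the full product class. -/
noncomputable def auxA (C : Bundled.{0} (fullLang L0 L1).Structure)
    (hC : C ∈ fullClass K0 K1) : Bundled.{0} L0.Structure :=
  hC.2.choose

lemma auxA_mem (C : Bundled.{0} (fullLang L0 L1).Structure) (hC : C ∈ fullClass K0 K1) :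
    auxA C hC ∈ K0 :=
  hC.2.choose_spec.1

/-- A chosen second factor witnessing membership in the full product class. -/
noncomputable def auxB (C : Bundled.{0} (fullLang L0 L1).Structure)
    (hC : C ∈ fullClass K0 K1) : Bundled.{0} L1.Structure :=
  hC.2.choose_spec.2.choose

lemma auxB_mem (C : Bundled.{0} (fullLang L0 L1).Structure) (hC : C ∈ fullClass K0 K1) :
    auxB C hC ∈ K1 :=
  hC.2.choose_spec.2.choose_spec.1

/-- A chosen embedding witnessing membership in the full product class. -/
noncomputable def auxE (C : Bundled.{0} (fullLang L0 L1).Structure)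
    (hC : C ∈ fullClass K0 K1) :
    C ↪[fullLang L0 L1] fullBundle (auxA C hC) (auxB C hC) :=
  hC.2.choose_spec.2.choose_spec.2.some

/-- The chosen embedding, as a map to the product type. -/
noncomputable def auxP (C : Bundled.{0} (fullLang L0 L1).Structure)
    (hC : C ∈ fullClass K0 K1) (c : C) : ↥(auxA C hC) × ↥(auxB C hC) :=
  auxE C hC c

/-- The maps of the full-product configuration. -/
noncomputable def auxF (c0 : Config L0 K0 L M n0) (c1 : Config L1 K1 L M n1)
    (C : Bundled.{0} (fullLang L0 L1).Structure) (hC : C ∈ fullClass K0 K1)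
    (c : C) : Fin (n0 + n1) → M :=
  Fin.addCases (c0.f (auxA C hC) (auxA_mem C hC) (auxP C hC c).1)
    (c1.f (auxB C hC) (auxB_mem C hC) (auxP C hC c).2)

end Aux

/-- injective configurations of `K0` and `K1` yield a configuration of the full
product. -/
theorem stmt15 (L0 : FirstOrder.Language.{u0, v0}) (L1 : FirstOrder.Language.{u1, v1})
    [L0.IsRelational] [L1.IsRelational]
    (K0 : StructClass L0) (K1 : StructClass L1)
    (hfin0 : AllFinite K0) (hiso0 : IsoClosed K0)
    (hfin1 : AllFinite K1) (hiso1 : IsoClosed K1)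
    (L : FirstOrder.Language.{u, v}) (M : Type w) [L.Structure M] (n0 n1 : ℕ)
    (h0 : ∃ c : Config L0 K0 L M n0, c.Injective)
    (h1 : ∃ c : Config L1 K1 L M n1, c.Injective) :
    Nonempty (Config (fullLang L0 L1) (fullClass K0 K1) L M (n0 + n1)) := by
  classical
  obtain ⟨c0, hc0⟩ := h0
  obtain ⟨c1, hc1⟩ := h1
  refine ⟨⟨prodInterp c0 c1, auxF c0 c1, ?_⟩⟩
  intro C hC m R a
  set A := auxA C hC with hA
  set B := auxB C hC with hB
  set e := auxE C hC with he
  have hmapA : ∀ (c : C) (j : Fin n0),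
      auxF c0 c1 C hC c (Fin.castAdd n1 j) = c0.f A (auxA_mem C hC) (auxP C hC c).1 j := by
    intro c j
    simp [auxF]; rfl
  have hmapB : ∀ (c : C) (j : Fin n1),
      auxF c0 c1 C hC c (Fin.natAdd n0 j) = c1.f B (auxB_mem C hC) (auxP C hC c).2 j := by
    intro c j
    simp [auxF]; rfl
  have hrel : ∀ {k : ℕ} (R : (fullLang L0 L1).Relations k) (x : Fin k → C),
      RelMap R x ↔ RelMap (M := fullBundle A B) R (fun i => auxP C hC (x i)) := by
    intro k R x
    rw [show (fun i => auxP C hC (x i)) = (e ∘ x) from rfl, Embedding.map_rel]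
  rcases R with (R | R) | R
  · -- an `L0`-relation
    refine (hrel _ a).trans ?_
    have key : RelMap (L := fullLang L0 L1) (M := fullBundle A B)
        (Sum.inl (Sum.inl R))
        (fun i => auxP C hC (a i)) ↔
        RelMap (M := A) R (fun i => (auxP C hC (a i)).1) := by exact Iff.rfl
    rw [key, c0.compat A (auxA_mem C hC) R]
    show _ ↔ Formula.Realize (Formula.relabel _ _) _
    rw [Formula.realize_relabel]
    apply iff_of_eq; congr 1
    funext z
    rcases z with ⟨i, j⟩ | z
    · simpa using (hmapA (a i) j).symm
    · rfl
  · -- an `L1`-relation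
    refine (hrel _ a).trans ?_
    have key : RelMap (L := fullLang L0 L1) (M := fullBundle A B)
        (Sum.inl (Sum.inr R))
        (fun i => auxP C hC (a i)) ↔
        RelMap (M := B) R (fun i => (auxP C hC (a i)).2) := by exact Iff.rfl
    rw [key, c1.compat B (auxB_mem C hC) R]
    show _ ↔ Formula.Realize (Formula.relabel _ _) _
    rw [Formula.realize_relabel]
    apply iff_of_eq; congr 1
    funext z
    rcases z with ⟨i, j⟩ | z
    · simpa using (hmapB (a i) j).symm
    · rfl
  · rcases R with R | R
    · -- the relation `E0`
      cases R
      refine (hrel _ a).trans ?_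
      have key : RelMap (L := fullLang L0 L1) (M := fullBundle A B)
          (Sum.inr (Sum.inl Language.adj))
          (fun i => auxP C hC (a i)) ↔
          (auxP C hC (a 0)).1 = (auxP C hC (a 1)).1 := by exact Iff.rfl
      rw [key]
      show _ ↔ Formula.Realize (L := L) (M := M) (BoundedFormula.iInf _) _
      rw [Formula.Realize]
      rw [BoundedFormula.realize_iInf]
      constructor
      · intro h j
        simp only [Term.equal, BoundedFormula.realize_bdEqual, Term.realize_relabel,
          Term.realize_var, Sum.elim_inl, Function.comp]
        rw [hmapA (a 0) j, hmapA (a 1) j, h]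
      · intro h
        apply hc0 A (auxA_mem C hC)
        funext j
        have := h j
        simp only [Term.equal, BoundedFormula.realize_bdEqual, Term.realize_relabel,
          Term.realize_var, Sum.elim_inl, Function.comp] at this
        rw [hmapA (a 0) j, hmapA (a 1) j] at this
        exact this
    · -- the relation `E1`
      cases R
      refine (hrel _ a).trans ?_
      have key : RelMap (L := fullLang L0 L1) (M := fullBundle A B)
          (Sum.inr (Sum.inr Language.adj))
          (fun i => auxP C hC (a i)) ↔
          (auxP C hC (a 0)).2 = (auxP C hC (a 1)).2 := by exact Iff.rfl
      rw [key]
      show _ ↔ Formula.Realize (L := L) (M := M) (BoundedFormula.iInf _) _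
      rw [Formula.Realize]
      rw [BoundedFormula.realize_iInf]
      constructor
      · intro h j
        simp only [Term.equal, BoundedFormula.realize_bdEqual, Term.realize_relabel,
          Term.realize_var, Sum.elim_inl, Function.comp]
        rw [hmapB (a 0) j, hmapB (a 1) j, h]
      · intro h
        apply hc1 B (auxB_mem C hC)
        funext j
        have := h j
        simp only [Term.equal, BoundedFormula.realize_bdEqual, Term.realize_relabel,
          Term.realize_var, Sum.elim_inl, Function.comp] at this
        rw [hmapB (a 0) j, hmapB (a 1) j] at this
        exact this

end ProductsPaper
end

section
/- Let L0 and L1 be relational languages and, for each t < 2, let K_t be a class of finite L_t-structures closed under isomorphism. Let L be a language, M an L-structure, and n_0, n_1 < ω. If there exists a K0-configuration into M^{n_0} and a K1-configuration into M^{n_1}, then there exists a (K0 * K1)-configuration into M^{n_0 + n_1}. -/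
/- Definitions following "Products of Classes of Finite Structures"
   (Guingona, Parnes, Scow). -/

open CategoryTheory FirstOrder FirstOrder.Language FirstOrder.Language.Structure

universe u v w w' u0 v0 u1 v1

namespace ProductsPaper

variable {L : FirstOrder.Language.{u, v}}

variable {L0 : FirstOrder.Language.{u0, v0}} {L1 : FirstOrder.Language.{u1, v1}}

def relabelCoords {M : Type*} {m n n' : ℕ} (σ : Fin n → Fin n') (φ : L.Formula ((Fin m × Fin n) ⊕ M)) :
    L.Formula ((Fin m × Fin n') ⊕ M) :=
  φ.relabel (Sum.map (Prod.map id σ) id)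

theorem realize_relabelCoords {M : Type*} [L.Structure M] {m n n' : ℕ} {σ : Fin n → Fin n'}
    (φ : L.Formula ((Fin m × Fin n) ⊕ M)) {x : Fin m → Fin n' → M} {y : Fin m → Fin n → M}
    (hxy : ∀ i j, x i (σ j) = y i j) :
    (relabelCoords σ φ).Realize (Sum.elim (fun p => x p.1 p.2) id) ↔
      φ.Realize (Sum.elim (fun p => y p.1 p.2) id) := by
  rw [relabelCoords, Formula.realize_relabel]
  congr! 1
  ext (p | a)
  exacts [hxy p.1 p.2, rfl]

def reductInl (A : Bundled.{0} (L0.sum L1).Structure) : Bundled.{0} L0.Structure :=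
  ⟨A, (LHom.sumInl (L := L0) (L' := L1)).reduct A⟩

def reductInr (A : Bundled.{0} (L0.sum L1).Structure) : Bundled.{0} L1.Structure :=
  ⟨A, (LHom.sumInr (L := L0) (L' := L1)).reduct A⟩

def Config.freeSuperposition {K0 : StructClass L0} {K1 : StructClass L1} {M : Type*}
    [L.Structure M] {n0 n1 : ℕ} (c0 : Config L0 K0 L M n0) (c1 : Config L1 K1 L M n1) :
    Config (L0.sum L1) (freeClass K0 K1) L M (n0 + n1) where
  I {_} R := match R with
    | .inl R => relabelCoords (Fin.castAdd n1) (c0.I R)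
    | .inr R => relabelCoords (Fin.natAdd n0) (c1.I R)
  f A hA a := Fin.append (c0.f (reductInl A) hA.2.1 a) (c1.f (reductInr A) hA.2.2 a)
  compat A hA m R a := by
    cases R with
    | inl R =>
      refine (c0.compat (reductInl A) hA.2.1 R a).trans ?_
      exact (realize_relabelCoords (c0.I R) fun i => Fin.append_left
        (c0.f (reductInl A) hA.2.1 (a i)) (c1.f (reductInr A) hA.2.2 (a i))).symm
    | inr R =>
      refine (c1.compat (reductInr A) hA.2.2 R a).trans ?_
      exact (realize_relabelCoords (c1.I R) fun i => Fin.append_right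
        (c0.f (reductInl A) hA.2.1 (a i)) (c1.f (reductInr A) hA.2.2 (a i))).symm

theorem stmt16_general (L0 : FirstOrder.Language.{u0, v0}) (L1 : FirstOrder.Language.{u1, v1})
    (K0 : StructClass L0) (K1 : StructClass L1)
    (L : FirstOrder.Language.{u, v}) (M : Type w) [L.Structure M] (n0 n1 : ℕ)
    (h0 : Nonempty (Config L0 K0 L M n0))
    (h1 : Nonempty (Config L1 K1 L M n1)) :
    Nonempty (Config (L0.sum L1) (freeClass K0 K1) L M (n0 + n1)) :=
  h0.map2 Config.freeSuperposition h1

/-- configurations of `K0` and `K1` yield a configuration of the free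
superposition. -/
theorem stmt16 (L0 : FirstOrder.Language.{u0, v0}) (L1 : FirstOrder.Language.{u1, v1})
    [L0.IsRelational] [L1.IsRelational]
    (K0 : StructClass L0) (K1 : StructClass L1)
    (hfin0 : AllFinite K0) (hiso0 : IsoClosed K0)
    (hfin1 : AllFinite K1) (hiso1 : IsoClosed K1)
    (L : FirstOrder.Language.{u, v}) (M : Type w) [L.Structure M] (n0 n1 : ℕ)
    (h0 : Nonempty (Config L0 K0 L M n0))
    (h1 : Nonempty (Config L1 K1 L M n1)) :
    Nonempty (Config (L0.sum L1) (freeClass K0 K1) L M (n0 + n1)) :=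
  stmt16_general L0 L1 K0 K1 L M n0 n1 h0 h1

end ProductsPaper
end

section
/- Let L0 and L1 be relational languages and, for each t < 2, let K_t be a class of finite L_t-structures closed under isomorphism. Suppose there exist n < ω and a map I assigning to each relation symbol R of L0, of arity m, a parameter-free quantifier-free L1-formula I(R) in m·n free variables, such that for every A ∈ K0 there exist B ∈ K1 and an injective function f_A : A → B^n with: for every relation symbol R of L0 of arity m and every (a_0,…,a_{m-1}) ∈ A^m, A ⊨ R(a_0,…,a_{m-1}) if and only if B ⊨ I(R)(f_A(a_0),…,f_A(a_{m-1})). Then for every language L and every complete L-theory T with infinite models, if T admits a K1-configuration then T admits a K0-configuration. -/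
/- Definitions following "Products of Classes of Finite Structures"
   (Guingona, Parnes, Scow). -/

open CategoryTheory FirstOrder FirstOrder.Language FirstOrder.Language.Structure

universe u v w w' u0 v0 u1 v1

namespace ProductsPaper

variable {L : FirstOrder.Language.{u, v}}

variable {L0 : FirstOrder.Language.{u0, v0}} {L1 : FirstOrder.Language.{u1, v1}}

section Stmt17Aux

set_option linter.unusedSectionVars false

variable {L1 : FirstOrder.Language.{u1, v1}} [L1.IsRelational]
  {L : FirstOrder.Language.{u, v}} {M : Type w} [L.Structure M] {ν : ℕ} {α : Type*}

def varOf0 (t : L1.Term (α ⊕ Fin 0)) : α :=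
  match t with
  | .var (Sum.inl a) => a
  | .var (Sum.inr i) => i.elim0
  | .func f _ => isEmptyElim f

theorem realize_varOf0 {B : Type*} [L1.Structure B] (t : L1.Term (α ⊕ Fin 0))
    (w : α ⊕ Fin 0 → B) : t.realize w = w (Sum.inl (varOf0 t)) :=
  match t with
  | .var (Sum.inl _) => rfl
  | .var (Sum.inr i) => i.elim0
  | .func f _ => isEmptyElim f

variable (J : ∀ {m : ℕ}, L1.Relations m → L.Formula ((Fin m × Fin ν) ⊕ M))

noncomputable def trQF : L1.BoundedFormula α 0 → L.BoundedFormula ((α × Fin ν) ⊕ M) 0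
  | .falsum => .falsum
  | .equal t₁ t₂ => BoundedFormula.iInf fun j : Fin ν =>
      Term.bdEqual (.var (Sum.inl (Sum.inl (varOf0 t₁, j))))
        (.var (Sum.inl (Sum.inl (varOf0 t₂, j))))
  | .rel R ts => Formula.relabel (Sum.map (fun p => (varOf0 (ts p.1), p.2)) id) (J R)
  | .imp φ ψ => .imp (trQF φ) (trQF ψ)
  | .all _ => .falsum

theorem trQF_falsum : trQF (α := α) (M := M) J .falsum = .falsum := by
  simp only [trQF]
theorem trQF_equal (t₁ t₂ : L1.Term (α ⊕ Fin 0)) :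
    trQF (M := M) J (t₁.bdEqual t₂) = BoundedFormula.iInf fun j : Fin ν =>
      Term.bdEqual (.var (Sum.inl (Sum.inl (varOf0 t₁, j))))
        (.var (Sum.inl (Sum.inl (varOf0 t₂, j)))) := by
  simp only [Term.bdEqual, trQF]
theorem trQF_rel {l : ℕ} (R : L1.Relations l) (ts : Fin l → L1.Term (α ⊕ Fin 0)) :
    trQF (M := M) J (R.boundedFormula ts)
      = Formula.relabel (Sum.map (fun p => (varOf0 (ts p.1), p.2)) id) (J R) := by
  simp only [Relations.boundedFormula, trQF]
theorem trQF_imp (φ ψ : L1.BoundedFormula α 0) :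
    trQF (M := M) J (φ.imp ψ) = .imp (trQF J φ) (trQF J ψ) := by
  simp only [trQF]

theorem formula_realize_eq {β : Type*} {φ : L.Formula β} (v : β → M) (ys : Fin 0 → M) :
    BoundedFormula.Realize φ v ys ↔ φ.Realize v := by
  rw [Subsingleton.elim ys default]; exact Iff.rfl

theorem realize_trQF {B : Type*} [L1.Structure B] {g : B → Fin ν → M}
    (hg : Function.Injective g)
    (hco : ∀ {m : ℕ} (S : L1.Relations m) (b : Fin m → B),
      RelMap S b ↔ (J S).Realize (Sum.elim (fun p => g (b p.1) p.2) id))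
    {φ : L1.BoundedFormula α 0} (hφ : φ.IsQF) (v : α → B) (xs : Fin 0 → B)
    (ys : Fin 0 → M) :
    φ.Realize v xs ↔
      (trQF J φ).Realize (Sum.elim (fun q : α × Fin ν => g (v q.1) q.2) id) ys := by
  induction hφ with
  | falsum => rw [trQF_falsum]; exact Iff.rfl
  | of_isAtomic h =>
    cases h with
    | equal t₁ t₂ =>
      rw [trQF_equal, BoundedFormula.realize_bdEqual, realize_varOf0, realize_varOf0,
        BoundedFormula.realize_iInf]
      simp only [Finset.mem_univ, true_implies, BoundedFormula.realize_bdEqual,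
        Term.realize_var, Sum.elim_inl]
      constructor
      · intro h j; rw [h]
      · intro h; exact hg (funext h)
    | @rel l R ts =>
      rw [trQF_rel, BoundedFormula.realize_rel, formula_realize_eq, Formula.realize_relabel]
      have hcomp : ((Sum.elim (fun q : α × Fin ν => g (v q.1) q.2) id) ∘
          (Sum.map (fun p : Fin l × Fin ν => (varOf0 (ts p.1), p.2)) id))
          = Sum.elim (fun p : Fin l × Fin ν => g ((fun i => v (varOf0 (ts i))) p.1) p.2) id := by
        funext x; cases x <;> rfl
      rw [hcomp, ← hco R (fun i => v (varOf0 (ts i)))]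
      simp only [realize_varOf0, Sum.elim_inl]
  | imp h₁ h₂ ih₁ ih₂ =>
    rw [trQF_imp, BoundedFormula.realize_imp, BoundedFormula.realize_imp, ih₁, ih₂]

end Stmt17Aux

/-- Generic transfer: a quantifier-free interpretation of `K0` into `K1` together with an
injective realization of `K1` in `M^ν` yields a `K0`-configuration into `M^(n·ν)`. -/
theorem config_of_interp {L0 : FirstOrder.Language.{u0, v0}} {L1 : FirstOrder.Language.{u1, v1}}
    [L0.IsRelational] [L1.IsRelational]
    {K0 : StructClass L0} {K1 : StructClass L1}
    {n : ℕ} (I : ∀ {m : ℕ}, L0.Relations m → L1.Formula (Fin m × Fin n))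
    (hqf : ∀ {m : ℕ} (R : L0.Relations m), (I R).IsQF)
    (hint : ∀ A ∈ K0, ∃ B ∈ K1, ∃ fA : A → Fin n → B, Function.Injective fA ∧
      ∀ {m : ℕ} (R : L0.Relations m) (a : Fin m → A),
        RelMap R a ↔ (I R).Realize (fun p => fA (a p.1) p.2))
    {L : FirstOrder.Language.{u, v}} {M : Type w} [L.Structure M] {ν : ℕ}
    (J : ∀ {m : ℕ}, L1.Relations m → L.Formula ((Fin m × Fin ν) ⊕ M))
    (H : ∀ B : Bundled.{0} L1.Structure, B ∈ K1 → ∃ g : B → Fin ν → M,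
      Function.Injective g ∧ ∀ {m : ℕ} (S : L1.Relations m) (b : Fin m → B),
        RelMap S b ↔ (J S).Realize (Sum.elim (fun p => g (b p.1) p.2) id)) :
    Nonempty (Config L0 K0 L M (n * ν)) := by
  choose B hB fA hfAinj hfA using hint
  choose g hginj hgco using H
  refine ⟨{
    I := fun {m} R => Formula.relabel
      (Sum.map (fun q : (Fin m × Fin n) × Fin ν => (q.1.1, finProdFinEquiv (q.1.2, q.2))) id)
      (trQF J (I R)),
    f := fun A hA a k => g (B A hA) (hB A hA)
      (fA A hA a (finProdFinEquiv.symm k).1) (finProdFinEquiv.symm k).2,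
    compat := ?_ }⟩
  intro A hA m R a
  rw [hfA A hA R a, Formula.realize_relabel]
  have key := realize_trQF J (hginj (B A hA) (hB A hA))
    (fun {m'} S b => hgco (B A hA) (hB A hA) S b) (hqf R)
    (fun p : Fin m × Fin n => fA A hA (a p.1) p.2) default default
  have hcomp : ((Sum.elim (fun p : Fin m × Fin (n * ν) => g (B A hA) (hB A hA)
        (fA A hA (a p.1) (finProdFinEquiv.symm p.2).1) (finProdFinEquiv.symm p.2).2) id) ∘
      (Sum.map (fun q : (Fin m × Fin n) × Fin ν => (q.1.1, finProdFinEquiv (q.1.2, q.2))) id))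
      = Sum.elim (fun q : (Fin m × Fin n) × Fin ν =>
          g (B A hA) (hB A hA) ((fun p : Fin m × Fin n => fA A hA (a p.1) p.2) q.1) q.2) id := by
    funext x
    cases x with
    | inl q =>
      simp only [Function.comp_apply, Sum.map_inl, Sum.elim_inl]
      rw [show (finProdFinEquiv.symm (finProdFinEquiv (q.1.2, q.2))) = (q.1.2, q.2)
        from Equiv.symm_apply_apply _ _]
    | inr x => rfl
  rw [hcomp]
  exact key

/-- a quantifier-free interpretation of `K0` into `K1` transfers
configurations: every complete theory with infinite models admitting a `K1`-configuration
admits a `K0`-configuration. -/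
theorem stmt17 (L0 : FirstOrder.Language.{u0, v0}) (L1 : FirstOrder.Language.{u1, v1})
    [L0.IsRelational] [L1.IsRelational]
    (K0 : StructClass L0) (K1 : StructClass L1)
    (hfin0 : AllFinite K0) (hiso0 : IsoClosed K0)
    (hfin1 : AllFinite K1) (hiso1 : IsoClosed K1)
    (n : ℕ) (I : ∀ {m : ℕ}, L0.Relations m → L1.Formula (Fin m × Fin n))
    (hqf : ∀ {m : ℕ} (R : L0.Relations m), (I R).IsQF)
    (hint : ∀ A ∈ K0, ∃ B ∈ K1, ∃ fA : A → Fin n → B, Function.Injective fA ∧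
      ∀ {m : ℕ} (R : L0.Relations m) (a : Fin m → A),
        RelMap R a ↔ (I R).Realize (fun p => fA (a p.1) p.2)) :
    ∀ (L : FirstOrder.Language.{u, v}) (T : L.Theory), T.IsComplete → HasInfiniteModel T →
      AdmitsConfig K1 T → AdmitsConfig K0 T := by
  intro L T hT hInf hAdm
  classical
  obtain ⟨M, Mstr, hMT, n', ⟨c⟩⟩ := hAdm
  obtain ⟨N, Nstr, hNT, hNinf⟩ := hInf
  letI : L.Structure M := Mstr
  letI : L.Structure N := Nstr
  haveI : Infinite N := hNinf
  by_cases hM : Nonempty M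
  · -- main case: `M` is nonempty, hence infinite
    haveI : Nonempty M := hM
    haveI : M ⊨ T := hMT
    haveI : N ⊨ T := hNT
    have hMinfinite : Infinite M := by
      rw [Cardinal.infinite_iff, Cardinal.aleph0_le]
      intro k
      rw [← Sentence.realize_cardGe (L := L) (M := M) k,
        hT.realize_sentence_iff (Sentence.cardGe L k) M,
        ← hT.realize_sentence_iff (Sentence.cardGe L k) N, Sentence.realize_cardGe]
      exact le_trans (le_of_lt (Cardinal.nat_lt_aleph0 k)) (Cardinal.infinite_iff.mp hNinf)
    refine ⟨M, Mstr, hMT, n * (n' + 1), config_of_interp I hqf hint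
      (fun {m} S => Formula.relabel
        (Sum.map (fun p : Fin m × Fin n' => (p.1, Fin.castSucc p.2)) id) (c.I S)) ?_⟩
    intro Bb hBb
    haveI : Finite Bb := hfin1 Bb hBb
    obtain ⟨e, he⟩ := exists_injective_nat Bb
    refine ⟨fun b => Fin.snoc (c.f Bb hBb b) (Infinite.natEmbedding M (e b)), ?_, ?_⟩
    · intro x y hxy
      have := congrFun hxy (Fin.last n')
      exact he ((Infinite.natEmbedding M).injective (by simpa [Fin.snoc_last] using this))
    · intro m S b
      rw [c.compat Bb hBb S b, Formula.realize_relabel]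
      apply iff_of_eq; congr 1
      funext x
      cases x with
      | inl p =>
        simp only [Function.comp_apply, Sum.map_inl, Sum.elim_inl, Fin.snoc_castSucc]
      | inr x => rfl
  · -- degenerate case: `M` is empty; use the infinite model `N`
    haveI : IsEmpty M := not_nonempty_iff.mp hM
    refine ⟨N, Nstr, hNT, n * 1, config_of_interp I hqf hint
      (fun {m} S => if (∃ w : ((Fin m × Fin n') ⊕ M) → M, (c.I S).Realize w)
        then (⊤ : L.Formula ((Fin m × Fin 1) ⊕ N)) else ⊥) ?_⟩
    intro Bb hBb
    haveI : Finite Bb := hfin1 Bb hBb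
    obtain ⟨e, he⟩ := exists_injective_nat Bb
    refine ⟨fun b _ => Infinite.natEmbedding N (e b), ?_, ?_⟩
    · intro x y hxy
      exact he ((Infinite.natEmbedding N).injective (congrFun hxy 0))
    · intro m S b
      have h0 : RelMap S b ↔ (c.I S).Realize
          (Sum.elim (fun p => c.f Bb hBb (b p.1) p.2) id) := c.compat Bb hBb S b
      have hsub : ∀ w w' : ((Fin m × Fin n') ⊕ M) → M, w = w' := by
        intro w w'; funext x; exact (IsEmpty.false (w x)).elim
      by_cases hc : (∃ w : ((Fin m × Fin n') ⊕ M) → M, (c.I S).Realize w)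
      · have hrel : RelMap S b := by
          obtain ⟨w, hw⟩ := hc
          rw [h0, hsub (Sum.elim (fun p => c.f Bb hBb (b p.1) p.2) id) w]; exact hw
        simp only [if_pos hc]
        simp [hrel, Formula.Realize]
      · have hrel : ¬ RelMap S b := fun hr => hc ⟨_, h0.mp hr⟩
        simp only [if_neg hc]
        simp [hrel, Formula.Realize]

end ProductsPaper
end
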